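/- arXiv:math/0509127 — 6 statements merged into one kernel-verified Lean document; each statement's English description precedes it below -/
import Mathlib

section
/- Let G=(V,E) be a finite graph without loops, q ∈ {2,3,…}, β > 0, J=(J_e : e∈E) non-negative reals, and set λ_e = βJ_e for each e ∈ E. Then for all distinct vertices x,y ∈ V, the Potts two-point function satisfies σ(x,y) = E_λ(C(G_P^{x,y};q)) / E_λ(C(G_P;q)), i.e. the ratio of the mean number of non-zero mod-q flows on the Poisson graph with the extra edge xy added, to the mean number of non-zero mod-q flows on the Poisson graph itself. -/
/-!
Write `q δ_{ab} - 1 = ∑_{k ≠ 0} ψ (k (a - b))` for a primitive additive character `ψ` of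
`ZMod q`. Expanding `∏_i (q δ_i(σ) - 1)` over the edges of a multigraph turns it into a sum over
nowhere-zero edge labellings `f`; summation by parts rewrites `∑_i f_i (σ_{s i} - σ_{t i})` as
`∑_v σ_v (div f)_v`, and summing over the spins `σ` keeps exactly the labellings with zero
divergence. Hence `∑_σ ∏_i (q δ_i(σ) - 1) = q^|V| C(H; q)`.

On `G_m` the edge `e` contributes `(q δ_e(σ) - 1)^{m_e}`, and the Poisson generating function
`E[r^{P(e)}] = exp (λ_e (r - 1))` turns the expectation over `m = P` into
`q^{-|V|} e^{-Σλ} ∑_σ exp (∑_e λ_e (q δ_e(σ) - 1))`, a multiple of the Potts partition function;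
with the extra edge `xy` the factor `q δ_{σ_x σ_y} - 1` appears. The prefactors cancel in the ratio.
-/

open scoped BigOperators symmDiff Classical

noncomputable section FlowsAndFerromagnets

/-- The number of non-zero mod-`q` flows on the (multi)graph with vertex type `V`,
edge-index type `ι`, and a fixed orientation in which edge `i` leaves `s i` and
arrives at `t i`.  A mod-`q` flow assigns a value of `ZMod q` to every oriented edge
so that, at every vertex, the total flow leaving equals the total flow arriving
(mod `q`); it is non-zero if no edge carries the value `0`. -/
def flowCount (V : Type) [Fintype V] [DecidableEq V] {ι : Type} [Fintype ι]
    (s t : ι → V) (q : ℕ) : ℕ :=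
  Nat.card {f : ι → ZMod q //
    (∀ i, f i ≠ 0) ∧
    ∀ v : V, (∑ i, if s i = v then f i else 0) = (∑ i, if t i = v then f i else 0)}

/-- `C(G_m; q)`: the number of non-zero mod-`q` flows on the multigraph `G_m`
obtained from `G` (edges indexed by `E`, with endpoints `s e`, `t e`) by replacing
each edge `e` by `m e` parallel copies. -/
def flowCountM {V E : Type} [Fintype V] [DecidableEq V] [Fintype E]
    (s t : E → V) (m : E → ℕ) (q : ℕ) : ℕ :=
  flowCount V (fun x : Σ e : E, Fin (m e) => s x.1) (fun x : Σ e : E, Fin (m e) => t x.1) q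

/-- `C(G_m^{x,y}; q)`: the number of non-zero mod-`q` flows on the multigraph `G_m`
augmented by one extra edge joining `x` and `y`. -/
def flowCountMxy {V E : Type} [Fintype V] [DecidableEq V] [Fintype E]
    (s t : E → V) (m : E → ℕ) (x y : V) (q : ℕ) : ℕ :=
  flowCount V
    (fun o : Option (Σ e : E, Fin (m e)) => o.elim x (fun z => s z.1))
    (fun o : Option (Σ e : E, Fin (m e)) => o.elim y (fun z => t z.1)) q

/-- The Poisson weight `∏_e e^{-λ_e} λ_e^{m_e} / m_e!` of a vector of edge multiplicities. -/
def poissonWt {E : Type} [Fintype E] (lam : E → ℝ) (m : E → ℕ) : ℝ :=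
  ∏ e, Real.exp (-lam e) * lam e ^ (m e) / (Nat.factorial (m e))

/-- Expectation `E_λ(f(P))` with respect to independent Poisson multiplicities `P e`
of mean `lam e`. -/
def poissonExp {E : Type} [Fintype E] (lam : E → ℝ) (f : (E → ℕ) → ℝ) : ℝ :=
  ∑' m : E → ℕ, poissonWt lam m * f m

/-- Probability `P_λ(P ∈ A)` with respect to independent Poisson multiplicities. -/
def poissonProb {E : Type} [Fintype E] (lam : E → ℝ) (A : (E → ℕ) → Prop) : ℝ :=
  ∑' m : E → ℕ, poissonWt lam m * (if A m then 1 else 0)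

/-- Probability of an event for two independent families of independent Poisson
multiplicities. -/
def poissonProb2 {E : Type} [Fintype E] (lam : E → ℝ)
    (A : (E → ℕ) → (E → ℕ) → Prop) : ℝ :=
  ∑' m : E → ℕ, ∑' m' : E → ℕ,
    poissonWt lam m * poissonWt lam m' * (if A m m' then 1 else 0)

/-- The (unnormalised) Potts weight `exp(∑_e β J_e (q δ_e(σ) - 1))` of a spin
configuration `σ`. -/
def pottsWt {V E : Type} [Fintype E] (s t : E → V) (q : ℕ) (β : ℝ) (J : E → ℝ)
    (σ : V → Fin q) : ℝ :=
  Real.exp (∑ e, β * J e * ((q : ℝ) * (if σ (s e) = σ (t e) then 1 else 0) - 1))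

/-- The Potts partition function `Z_P`. -/
def pottsZ (V : Type) {E : Type} [Fintype V] [DecidableEq V] [Fintype E]
    (s t : E → V) (q : ℕ) (β : ℝ) (J : E → ℝ) : ℝ :=
  ∑ σ : V → Fin q, pottsWt s t q β J σ

/-- The Potts two-point function `σ(x,y) = ∑_σ (q δ_{σ_x,σ_y} - 1) π(σ)`. -/
def pottsTwoPoint {V E : Type} [Fintype V] [DecidableEq V] [Fintype E]
    (s t : E → V) (q : ℕ) (β : ℝ) (J : E → ℝ) (x y : V) : ℝ :=
  (∑ σ : V → Fin q, ((q : ℝ) * (if σ x = σ y then 1 else 0) - 1) * pottsWt s t q β J σ)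
    / pottsZ V s t q β J

/-- The degree of the vertex `v` in the multigraph `G_m`. -/
def mDeg {V E : Type} [Fintype E] [DecidableEq V] (s t : E → V) (m : E → ℕ) (v : V) : ℕ :=
  ∑ e, m e * ((if s e = v then 1 else 0) + (if t e = v then 1 else 0))

/-- The multigraph `G_m` is even: every vertex has even degree. -/
def IsEvenM {V E : Type} [Fintype E] [DecidableEq V] (s t : E → V) (m : E → ℕ) : Prop :=
  ∀ v : V, Even (mDeg s t m v)

/-- The multigraph `G_m^{x,y}` (with one extra edge joining `x` and `y`) is even. -/
def IsEvenMxy {V E : Type} [Fintype E] [DecidableEq V] (s t : E → V) (m : E → ℕ)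
    (x y : V) : Prop :=
  ∀ v : V, Even (mDeg s t m v + (if v = x then 1 else 0) + (if v = y then 1 else 0))

/-- The source set `∂m` of a vector of multiplicities: the set of vertices of odd
degree in `G_m`. -/
def sources {V E : Type} [Fintype E] [DecidableEq V] (s t : E → V) (m : E → ℕ) : Set V :=
  {v : V | Odd (mDeg s t m v)}

/-- The simple graph on `V` induced by the edges `e` satisfying `pred e`. -/
def openGraph {V E : Type} (s t : E → V) (pred : E → Prop) : SimpleGraph V :=
  SimpleGraph.fromRel (fun a b => ∃ e, pred e ∧ s e = a ∧ t e = b)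

/-- `x ↔ y in m`: `x` and `y` lie in the same component of `(V, {e : m e ≥ 1})`. -/
def ConnectedIn {V E : Type} (s t : E → V) (m : E → ℕ) (x y : V) : Prop :=
  (openGraph s t fun e => m e ≠ 0).Reachable x y

/-- `x ↔ y` in the percolation configuration `ω`. -/
def ConnectedInB {V E : Type} (s t : E → V) (ω : E → Bool) (x y : V) : Prop :=
  (openGraph s t fun e => ω e = true).Reachable x y

/-- The number of connected components of the graph `(V, {e : pred e})`
(isolated vertices count). -/
def numComp {V E : Type} [Fintype V] (s t : E → V) (pred : E → Prop) : ℕ :=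
  Nat.card (openGraph s t pred).ConnectedComponent

/-- Product (percolation) weight of a configuration, with edge densities `p`. -/
def percWt {E : Type} [Fintype E] (p : E → ℝ) (ω : E → Bool) : ℝ :=
  ∏ e, if ω e then p e else 1 - p e

/-- Random-cluster weight of the configuration `ω`. -/
def rcWt {V E : Type} [Fintype V] [Fintype E] (s t : E → V) (p : E → ℝ) (q : ℝ)
    (ω : E → Bool) : ℝ :=
  percWt p ω * q ^ numComp s t (fun e => ω e = true)

/-- Random-cluster probability `φ_{p,q}(A)` of an event `A`. -/
def rcProb {V E : Type} [Fintype V] [Fintype E] (s t : E → V) (p : E → ℝ) (q : ℝ)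
    (A : (E → Bool) → Prop) : ℝ :=
  (∑ ω : E → Bool, if A ω then rcWt s t p q ω else 0) / (∑ ω : E → Bool, rcWt s t p q ω)

/-- The Whitney rank-generating function `W(u,v) = ∑_{F' ⊆ F} u^{r(F')} v^{c(F')}`
of the multigraph with vertex type `V` and edge-index type `ι`, where
`r(F') = |V| - k(F')` and `c(F') = |F'| - |V| + k(F')`. -/
def whitney (V : Type) [Fintype V] {ι : Type} [Fintype ι] (s t : ι → V) (u v : ℝ) : ℝ :=
  ∑ F : Finset ι,
    u ^ (Fintype.card V - numComp s t (· ∈ F)) *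
      v ^ (F.card - (Fintype.card V - numComp s t (· ∈ F)))

/-- `F_q(G_m) = (-1)^{|edges| + |V| - 1} W_{G_m}(-1, -q)`, a real-`q` version of the
flow polynomial of the multigraph `G_m`. -/
def flowPolyW {V E : Type} [Fintype V] [Fintype E] (s t : E → V) (q : ℝ) (m : E → ℕ) : ℝ :=
  (-1 : ℝ) ^ ((∑ e, m e) + Fintype.card V - 1) *
    whitney V (fun x : Σ e : E, Fin (m e) => s x.1) (fun x : Σ e : E, Fin (m e) => t x.1)
      (-1) (-q)

/-- `F_q(G_m^{x,y})`: as `flowPolyW`, for the multigraph `G_m` with one extra edge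
joining `x` and `y`. -/
def flowPolyWxy {V E : Type} [Fintype V] [Fintype E] (s t : E → V) (q : ℝ) (m : E → ℕ)
    (x y : V) : ℝ :=
  (-1 : ℝ) ^ (((∑ e, m e) + 1) + Fintype.card V - 1) *
    whitney V (fun o : Option (Σ e : E, Fin (m e)) => o.elim x (fun z => s z.1))
      (fun o : Option (Σ e : E, Fin (m e)) => o.elim y (fun z => t z.1)) (-1) (-q)

end FlowsAndFerromagnets

open Finset

namespace AddChar

lemma map_sum_eq_prod {A M ι : Type*} [AddCommMonoid A] [CommMonoid M] (ψ : AddChar A M)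
    (s : Finset ι) (f : ι → A) : ψ (∑ i ∈ s, f i) = ∏ i ∈ s, ψ (f i) := by
  classical
  induction s using Finset.induction_on with
  | empty => simp
  | insert a s ha ih => rw [sum_insert ha, prod_insert ha, map_add_eq_mul, ih]

end AddChar

def centredDelta {S K : Type*} [DecidableEq S] [Ring K] (q : ℕ) (a b : S) : K :=
  q * (if a = b then 1 else 0) - 1

def divergence {V ι R : Type*} [DecidableEq V] [Fintype ι] [AddCommGroup R] (s t : ι → V)
    (f : ι → R) (v : V) : R :=
  (∑ i, if s i = v then f i else 0) - ∑ i, if t i = v then f i else 0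

section Flows

variable {V ι : Type*} [Fintype V] [DecidableEq V] [Fintype ι]

lemma sum_mul_sub_eq_sum_mul_divergence {R : Type*} [CommRing R] (s t : ι → V) (f : ι → R)
    (σ : V → R) : ∑ i, f i * (σ (s i) - σ (t i)) = ∑ v, σ v * divergence s t f v := by
  have h (r : ι → V) : ∑ v, σ v * ∑ i, (if r i = v then f i else 0) = ∑ i, f i * σ (r i) := by
    simp_rw [mul_sum, mul_ite, mul_zero]
    rw [sum_comm]
    simp [mul_comm]
  simp only [divergence, mul_sub, sum_sub_distrib, h]

variable {R K : Type*} [CommRing R] [Fintype R] [DecidableEq R] [CommRing K] [IsDomain K]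
  {ψ : AddChar R K}

lemma centredDelta_card_eq_sum_addChar (hψ : ψ.IsPrimitive) (a b : R) :
    centredDelta (Fintype.card R) a b = ∑ k ∈ {0}ᶜ, ψ (k * (a - b)) := by
  have h := sum_compl_add_sum {0} fun k => ψ (k * (a - b))
  rw [sum_singleton, zero_mul, ψ.map_zero_eq_one, AddChar.sum_mulShift _ hψ] at h
  rw [centredDelta, eq_sub_of_add_eq h]
  simp [sub_eq_zero]

lemma sum_addChar_sum_mul_eq_ite (hψ : ψ.IsPrimitive) (d : V → R) :
    ∑ σ : V → R, ψ (∑ v, σ v * d v)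
      = if d = 0 then (Fintype.card R : K) ^ Fintype.card V else 0 := by
  simp_rw [AddChar.map_sum_eq_prod]
  rw [← Fintype.prod_sum fun v c => ψ (c * d v)]
  simp_rw [AddChar.sum_mulShift _ hψ]
  simp [prod_ite_zero, funext_iff]

theorem sum_prod_centredDelta_eq_card_flows (hψ : ψ.IsPrimitive) (s t : ι → V) :
    ∑ σ : V → R, ∏ i, (centredDelta (Fintype.card R) (σ (s i)) (σ (t i)) : K)
      = (Fintype.card R : K) ^ Fintype.card V *
          #{f : ι → R | (∀ i, f i ≠ 0) ∧ divergence s t f = 0} :=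
  calc ∑ σ : V → R, ∏ i, (centredDelta (Fintype.card R) (σ (s i)) (σ (t i)) : K)
      = ∑ σ : V → R, ∑ f ∈ Fintype.piFinset fun _ => ({0}ᶜ : Finset R),
          ψ (∑ i, f i * (σ (s i) - σ (t i))) := by
        simp_rw [centredDelta_card_eq_sum_addChar hψ, prod_univ_sum, AddChar.map_sum_eq_prod]
    _ = ∑ f ∈ Fintype.piFinset fun _ => ({0}ᶜ : Finset R), ∑ σ : V → R,
          ψ (∑ v, σ v * divergence s t f v) := by
        rw [sum_comm]
        simp_rw [sum_mul_sub_eq_sum_mul_divergence]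
    _ = ∑ f ∈ Fintype.piFinset fun _ => ({0}ᶜ : Finset R),
          if divergence s t f = 0 then (Fintype.card R : K) ^ Fintype.card V else 0 := by
        simp_rw [sum_addChar_sum_mul_eq_ite hψ]
    _ = _ := by
        rw [← sum_filter, sum_const, nsmul_eq_mul, mul_comm]
        congr 3
        ext f
        simp

end Flows

@[simp, norm_cast]
lemma Complex.ofReal_centredDelta {S : Type*} [DecidableEq S] (q : ℕ) (a b : S) :
    ((centredDelta q a b : ℝ) : ℂ) = centredDelta q a b := by
  simp [centredDelta, apply_ite]

lemma centredDelta_of_injective {S T K : Type*} [DecidableEq S] [DecidableEq T] [Ring K]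
    {f : S → T} (hf : Function.Injective f) (q : ℕ) (a b : S) :
    (centredDelta q (f a) (f b) : K) = centredDelta q a b := by
  simp [centredDelta, hf.eq_iff]

section FlowCount

variable {V ι E : Type} [Fintype V] [DecidableEq V] [Fintype ι] [Fintype E] (q : ℕ) [NeZero q]

lemma flowCount_eq_card (s t : ι → V) :
    flowCount V s t q = #{f : ι → ZMod q | (∀ i, f i ≠ 0) ∧ divergence s t f = 0} := by
  rw [flowCount, Nat.card_eq_fintype_card, Fintype.card_subtype]
  congr 2
  ext f
  simp [divergence, funext_iff, sub_eq_zero]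

theorem sum_prod_centredDelta_eq_pow_mul_flowCount (s t : ι → V) :
    ∑ σ : V → Fin q, ∏ i, (centredDelta q (σ (s i)) (σ (t i)) : ℝ)
      = q ^ Fintype.card V * flowCount V s t q := by
  apply Complex.ofReal_injective
  let e : Fin q ≃ ZMod q := (ZMod.finEquiv q).toEquiv
  have hflows := sum_prod_centredDelta_eq_card_flows (ZMod.isPrimitive_stdAddChar q) s t
  rw [ZMod.card, ← flowCount_eq_card] at hflows
  push_cast
  simp_rw [← hflows, ← centredDelta_of_injective (K := ℂ) e.injective q]
  exact Fintype.sum_equiv (Equiv.piCongrRight fun _ => e) _ _ fun σ => rfl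

lemma pow_mul_flowCountM (s t : E → V) (m : E → ℕ) :
    (q : ℝ) ^ Fintype.card V * flowCountM s t m q
      = ∑ σ : V → Fin q, ∏ e, (centredDelta q (σ (s e)) (σ (t e)) : ℝ) ^ m e := by
  simp [flowCountM, ← sum_prod_centredDelta_eq_pow_mul_flowCount, Fintype.prod_sigma]

lemma pow_mul_flowCountMxy (s t : E → V) (m : E → ℕ) (x y : V) :
    (q : ℝ) ^ Fintype.card V * flowCountMxy s t m x y q
      = ∑ σ : V → Fin q, centredDelta q (σ x) (σ y) *
          ∏ e, (centredDelta q (σ (s e)) (σ (t e)) : ℝ) ^ m e := by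
  simp [flowCountMxy, ← sum_prod_centredDelta_eq_pow_mul_flowCount, Fintype.prod_option,
    Fintype.prod_sigma]

end FlowCount

theorem hasSum_pi_prod {ι κ : Type*} [Fintype ι] {g : ι → κ → ℝ} (hg : ∀ i, Summable (g i)) :
    HasSum (fun m : ι → κ => ∏ i, g i (m i)) (∏ i, ∑' k, g i k) := by
  suffices ∀ [Fintype ι] (g : ι → κ → ℝ), (∀ i, Summable (g i)) →
      HasSum (fun m : ι → κ => ∏ i, g i (m i)) (∏ i, ∑' k, g i k) from this g hg
  clear! g
  induction ι using Finite.induction_empty_option with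
  | @of_equiv α β e hα =>
    intro _ g hg
    have := Fintype.ofEquiv β e.symm
    have h := hα (fun a => g (e a)) fun a => hg (e a)
    rw [← (e.arrowCongr (Equiv.refl κ)).hasSum_iff, ← Fintype.prod_equiv e _ _ fun _ => rfl]
    convert h using 2 with m
    exact (Fintype.prod_equiv e _ _ fun a => by simp).symm
  | h_empty =>
    intro _ g _
    simp
  | @h_option α _ ih =>
    intro _ g hg
    obtain rfl : ‹Fintype (Option α)› = instFintypeOption := Subsingleton.elim _ _
    have hrest := ih (fun a => g (some a)) fun a => hg (some a)
    -- the induction hypothesis for `|g|` gives the absolute summability the Cauchy product needs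
    have hrest_abs : Summable fun m : α → κ => ‖∏ a, g (some a) (m a)‖ := by
      simpa [abs_prod] using (ih (fun a k => |g (some a) k|) fun a => (hg (some a)).abs).summable
    have hprod := (hg none).hasSum.mul hrest <| summable_mul_of_summable_norm (R := ℝ)
      (f := g none) (g := fun m : α → κ => ∏ a, g (some a) (m a)) (hg none).norm hrest_abs
    rw [Fintype.prod_option, ← (Equiv.piOptionEquivProd (β := fun _ => κ)).symm.hasSum_iff]
    exact hprod.congr_fun fun p => by simp only [Function.comp_apply, Fintype.prod_option]; rfl

lemma hasSum_poisson_mul_pow (lam r : ℝ) :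
    HasSum (fun n : ℕ => Real.exp (-lam) * lam ^ n / n.factorial * r ^ n)
      (Real.exp (lam * (r - 1))) := by
  have h : HasSum (fun n : ℕ => (lam * r) ^ n / n.factorial) (Real.exp (lam * r)) := by
    rw [Real.exp_eq_exp_ℝ]
    exact NormedSpace.expSeries_div_hasSum_exp (lam * r)
  rw [show lam * (r - 1) = -lam + lam * r by ring, Real.exp_add]
  refine (h.mul_left (Real.exp (-lam))).congr_fun fun n => ?_
  ring

theorem hasSum_poissonWt_mul_prod_pow {E : Type} [Fintype E] (lam r : E → ℝ) :
    HasSum (fun m => poissonWt lam m * ∏ e, r e ^ m e) (Real.exp (∑ e, lam e * (r e - 1))) := by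
  have h := hasSum_pi_prod fun e => (hasSum_poisson_mul_pow (lam e) (r e)).summable
  simp_rw [(hasSum_poisson_mul_pow _ _).tsum_eq, ← Real.exp_sum] at h
  convert h using 2 with m
  rw [poissonWt, ← prod_mul_distrib]

lemma poissonExp_sum_mul_prod_pow {E Ω : Type} [Fintype E] [Fintype Ω] (lam : E → ℝ)
    (c : Ω → ℝ) (r : Ω → E → ℝ) :
    poissonExp lam (fun m => ∑ ω, c ω * ∏ e, r ω e ^ m e)
      = Real.exp (-∑ e, lam e) * ∑ ω, c ω * Real.exp (∑ e, lam e * r ω e) := by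
  refine HasSum.tsum_eq ?_
  simp_rw [mul_sum, mul_left_comm (poissonWt lam _)]
  refine hasSum_sum fun ω _ => ?_
  have hval : Real.exp (-∑ e, lam e) * (c ω * Real.exp (∑ e, lam e * r ω e))
      = c ω * Real.exp (∑ e, lam e * (r ω e - 1)) := by
    rw [mul_left_comm, ← Real.exp_add]
    simp [mul_sub, sum_sub_distrib, neg_add_eq_sub]
  rw [hval]
  exact (hasSum_poissonWt_mul_prod_pow lam (r ω)).mul_left (c ω)

section PoissonFlows

variable {V E : Type} [Fintype V] [DecidableEq V] [Fintype E] (s t : E → V) (q : ℕ) [NeZero q]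
  (lam : E → ℝ)

lemma poissonExp_flowCountM :
    poissonExp lam (fun m => (flowCountM s t m q : ℝ))
      = ((q : ℝ) ^ Fintype.card V)⁻¹ * Real.exp (-∑ e, lam e) *
          ∑ σ : V → Fin q, Real.exp (∑ e, lam e * centredDelta q (σ (s e)) (σ (t e))) := by
  have hC (m : E → ℕ) : (flowCountM s t m q : ℝ) = ∑ σ : V → Fin q, ((q : ℝ) ^ Fintype.card V)⁻¹ *
      ∏ e, (centredDelta q (σ (s e)) (σ (t e)) : ℝ) ^ m e := by
    rw [← mul_sum, ← pow_mul_flowCountM, inv_mul_cancel_left₀ (by simp [NeZero.ne q])]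
  simp_rw [hC, poissonExp_sum_mul_prod_pow, ← mul_sum]
  ring

lemma poissonExp_flowCountMxy (x y : V) :
    poissonExp lam (fun m => (flowCountMxy s t m x y q : ℝ))
      = ((q : ℝ) ^ Fintype.card V)⁻¹ * Real.exp (-∑ e, lam e) *
          ∑ σ : V → Fin q, centredDelta q (σ x) (σ y) *
            Real.exp (∑ e, lam e * centredDelta q (σ (s e)) (σ (t e))) := by
  have hC (m : E → ℕ) : (flowCountMxy s t m x y q : ℝ) = ∑ σ : V → Fin q,
      ((q : ℝ) ^ Fintype.card V)⁻¹ * centredDelta q (σ x) (σ y) *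
        ∏ e, (centredDelta q (σ (s e)) (σ (t e)) : ℝ) ^ m e := by
    simp_rw [mul_assoc, ← mul_sum, ← pow_mul_flowCountMxy,
      inv_mul_cancel_left₀ (by simp [NeZero.ne q] : (q : ℝ) ^ Fintype.card V ≠ 0)]
  simp_rw [hC, poissonExp_sum_mul_prod_pow, mul_assoc, ← mul_sum]
  ring

end PoissonFlows

theorem potts_correlation_eq_flow_ratio_general
    (V E : Type) [Fintype V] [DecidableEq V] [Fintype E]
    (s t : E → V)
    (q : ℕ) (hq : 2 ≤ q) (β : ℝ)
    (J : E → ℝ)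
    (lam : E → ℝ) (hlam : ∀ e, lam e = β * J e)
    (x y : V) :
    pottsTwoPoint s t q β J x y =
      poissonExp lam (fun m => (flowCountMxy s t m x y q : ℝ)) /
        poissonExp lam (fun m => (flowCountM s t m q : ℝ)) := by
  have : NeZero q := ⟨by omega⟩
  have hwt (σ : V → Fin q) :
      Real.exp (∑ e, lam e * centredDelta q (σ (s e)) (σ (t e))) = pottsWt s t q β J σ := by
    simp [pottsWt, centredDelta, hlam]
  have hK : ((q : ℝ) ^ Fintype.card V)⁻¹ * Real.exp (-∑ e, lam e) ≠ 0 := by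
    simp [NeZero.ne q, Real.exp_ne_zero]
  rw [poissonExp_flowCountMxy, poissonExp_flowCountM, mul_div_mul_left _ _ hK, pottsTwoPoint,
    pottsZ]
  simp only [hwt]
  rfl

/-- Theorem 1 (flows and Potts correlations): for a finite loopless graph `G`,
`q ∈ {2,3,…}`, `β > 0`, non-negative couplings `J`, and `λ_e = β J_e`, the Potts
two-point function `σ(x,y)` equals the ratio of the mean number of non-zero mod-`q`
flows on the Poisson graph `G_P^{x,y}` to that on `G_P`. -/
theorem potts_correlation_eq_flow_ratio
    (V E : Type) [Fintype V] [DecidableEq V] [Fintype E]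
    (s t : E → V) (hloop : ∀ e, s e ≠ t e)
    (q : ℕ) (hq : 2 ≤ q) (β : ℝ) (hβ : 0 < β)
    (J : E → ℝ) (hJ : ∀ e, 0 ≤ J e)
    (lam : E → ℝ) (hlam : ∀ e, lam e = β * J e)
    (x y : V) (hxy : x ≠ y) :
    pottsTwoPoint s t q β J x y =
      poissonExp lam (fun m => (flowCountMxy s t m x y q : ℝ)) /
        poissonExp lam (fun m => (flowCountM s t m q : ℝ)) :=
  potts_correlation_eq_flow_ratio_general V E s t q hq β J lam hlam x y
end

section
/- Let G=(V,E) be a finite graph without loops, q = 2, β > 0, J=(J_e : e∈E) non-negative reals, and set λ_e = βJ_e. Then for all distinct vertices x,y ∈ V, the Ising two-point function satisfies σ(x,y) = P_λ(G_P^{x,y} is even) / P_λ(G_P is even). -/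
open scoped BigOperators symmDiff Classical

set_option maxHeartbeats 4000000

noncomputable section IsingAux
namespace IsingAux

def consE (k : ℕ) : (ℕ × (Fin k → ℕ)) ≃ (Fin (k+1) → ℕ) where
  toFun p := Fin.cons p.1 p.2
  invFun m := (m 0, fun j => m j.succ)
  left_inv p := by simp
  right_inv m := by
    funext i
    refine Fin.cases ?_ ?_ i <;> simp

def arrE {α β : Type} (e : α ≃ β) : (β → ℕ) ≃ (α → ℕ) :=
  Equiv.arrowCongr e.symm (Equiv.refl ℕ)

lemma tsum_pi_prod_fin : ∀ (k : ℕ) (g : Fin k → ℕ → ℝ), (∀ i, Summable fun n => |g i n|) →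
    (Summable fun m : Fin k → ℕ => |∏ i, g i (m i)|) ∧
    ((∑' m : Fin k → ℕ, ∏ i, g i (m i)) = ∏ i, ∑' n, g i n) := by
  intro k
  induction k with
  | zero =>
    intro g _
    haveI : Subsingleton (Fin 0 → ℕ) := ⟨fun a b => funext fun i => i.elim0⟩
    haveI : Finite (Fin 0 → ℕ) := Finite.of_subsingleton
    constructor
    · exact Summable.of_finite
    · have h1 : ∀ m : Fin 0 → ℕ, (∏ i, g i (m i)) = 1 := fun m => by simp
      rw [tsum_congr h1,
        tsum_eq_single (fun i : Fin 0 => 0) (fun b hb => absurd (Subsingleton.elim b _) hb)]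
      simp
  | succ k ih =>
    intro g hg
    obtain ⟨ihS, ihEq⟩ := ih (fun j => g j.succ) (fun j => hg j.succ)
    have hg0 : Summable fun n => ‖g 0 n‖ := by simpa [Real.norm_eq_abs] using hg 0
    have hH : Summable fun m : Fin k → ℕ => ‖∏ j, g j.succ (m j)‖ := by
      simpa only [Real.norm_eq_abs] using ihS
    have hfe : ∀ p : ℕ × (Fin k → ℕ),
        (∏ i, g i ((consE k p) i)) = g 0 p.1 * ∏ j, g j.succ (p.2 j) := by
      intro p
      rw [Fin.prod_univ_succ]
      have h0 : consE k p = Fin.cons p.1 p.2 := rfl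
      rw [h0]
      simp
    constructor
    · rw [← (consE k).summable_iff]
      have h2 : ((fun m : Fin (k+1) → ℕ => |∏ i, g i (m i)|) ∘ consE k)
          = fun p : ℕ × (Fin k → ℕ) => |g 0 p.1| * |∏ j, g j.succ (p.2 j)| := by
        funext p; rw [Function.comp_apply, hfe p, abs_mul]
      rw [h2]
      have h3 : Summable fun n : ℕ => ‖|g 0 n|‖ := by
        simpa only [Real.norm_eq_abs, abs_abs] using hg0
      have h4 : Summable fun m : Fin k → ℕ => ‖|∏ j, g j.succ (m j)|‖ := by
        simpa only [Real.norm_eq_abs, abs_abs] using hH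
      exact summable_mul_of_summable_norm h3 h4
    · rw [← (consE k).tsum_eq]
      calc ∑' p : ℕ × (Fin k → ℕ), ∏ i, g i (consE k p i)
          = ∑' p : ℕ × (Fin k → ℕ), g 0 p.1 * ∏ j, g j.succ (p.2 j) := tsum_congr hfe
        _ = (∑' n, g 0 n) * ∑' m : Fin k → ℕ, ∏ j, g j.succ (m j) :=
            (tsum_mul_tsum_of_summable_norm hg0 hH).symm
        _ = ∏ i : Fin (k+1), ∑' n, g i n := by rw [ihEq, Fin.prod_univ_succ]

lemma tsum_pi_prod {ι : Type} [Fintype ι] (g : ι → ℕ → ℝ)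
    (hg : ∀ i, Summable fun n => |g i n|) :
    (Summable fun m : ι → ℕ => |∏ i, g i (m i)|) ∧
    ((∑' m : ι → ℕ, ∏ i, g i (m i)) = ∏ i, ∑' n, g i n) := by
  obtain e := Fintype.equivFin ι
  obtain ⟨hS, hEq⟩ := tsum_pi_prod_fin (Fintype.card ι) (fun j => g (e.symm j)) (fun j => hg _)
  have hfe : ∀ m' : Fin (Fintype.card ι) → ℕ,
      (∏ i, g i ((arrE e m') i)) = ∏ j, g (e.symm j) (m' j) := by
    intro m'
    rw [← Equiv.prod_comp e (fun j => g (e.symm j) (m' j))]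
    refine Finset.prod_congr rfl fun i _ => ?_
    have h0 : (arrE e m') i = m' (e i) := rfl
    rw [h0]
    simp
  constructor
  · rw [← (arrE e).summable_iff]
    have h2 : ((fun m : ι → ℕ => |∏ i, g i (m i)|) ∘ arrE e)
        = fun m' : Fin (Fintype.card ι) → ℕ => |∏ j, g (e.symm j) (m' j)| := by
      funext m'; rw [Function.comp_apply, hfe m']
    rw [h2]; exact hS
  · rw [← (arrE e).tsum_eq, tsum_congr hfe, hEq]
    exact Equiv.prod_comp e.symm (fun i => ∑' n, g i n)

/-- The spin `±1` associated to an element of `Fin 2`. -/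
def eps : Fin 2 → ℝ := fun a => if a = 0 then 1 else -1

lemma two_delta (a b : Fin 2) : (2:ℝ) * (if a = b then 1 else 0) - 1 = eps a * eps b := by
  fin_cases a <;> fin_cases b <;> norm_num [eps]

lemma sum_eps_pow (d : ℕ) : (∑ a : Fin 2, eps a ^ d) = if Even d then 2 else 0 := by
  rw [Fin.sum_univ_two]
  have h0 : eps 0 = 1 := by norm_num [eps]
  have h1 : eps 1 = -1 := by norm_num [eps]
  rw [h0, h1, one_pow]
  rcases Nat.even_or_odd d with h | h
  · rw [h.neg_one_pow, if_pos h]; norm_num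
  · rw [h.neg_one_pow, if_neg (Nat.not_even_iff_odd.mpr h)]; norm_num

lemma sum_prod_eps {V : Type} [Fintype V] [DecidableEq V] (d : V → ℕ) :
    (∑ σ : V → Fin 2, ∏ v, eps (σ v) ^ d v)
      = if (∀ v, Even (d v)) then (2:ℝ) ^ Fintype.card V else 0 := by
  have hps := Finset.prod_univ_sum (fun _ : V => (Finset.univ : Finset (Fin 2)))
    (fun v a => eps a ^ d v)
  rw [Fintype.piFinset_univ] at hps
  rw [← hps]
  by_cases h : ∀ v, Even (d v)
  · rw [if_pos h, Finset.prod_congr rfl (fun v _ => by rw [sum_eps_pow, if_pos (h v)]),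
      Finset.prod_const, Finset.card_univ]
  · rw [if_neg h]
    push_neg at h
    obtain ⟨v, hv⟩ := h
    exact Finset.prod_eq_zero (Finset.mem_univ v)
      (by rw [sum_eps_pow, if_neg hv])

lemma pow_mul_ite (x : ℝ) (P : Prop) [Decidable P] (k : ℕ) :
    x ^ (k * (if P then 1 else 0)) = if P then x ^ k else 1 := by
  split <;> simp

lemma prod_eps_single {V : Type} [Fintype V] [DecidableEq V] (σ : V → Fin 2) (x : V) :
    (∏ v, eps (σ v) ^ (if v = x then 1 else 0 : ℕ)) = eps (σ x) := by
  have h1 : ∀ v, eps (σ v) ^ (if v = x then 1 else 0 : ℕ) = if v = x then eps (σ v) else 1 := by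
    intro v; split <;> simp
  rw [Finset.prod_congr rfl fun v _ => h1 v, Finset.prod_ite_eq']
  simp

lemma prod_eps {V E : Type} [Fintype V] [DecidableEq V] [Fintype E]
    (s t : E → V) (m : E → ℕ) (σ : V → Fin 2) :
    (∏ e, (eps (σ (s e)) * eps (σ (t e))) ^ m e) = ∏ v, eps (σ v) ^ mDeg s t m v := by
  have hone : ∀ (u : V) (k : ℕ),
      eps (σ u) ^ k = ∏ v, eps (σ v) ^ (k * (if u = v then 1 else 0)) := by
    intro u k
    rw [Finset.prod_congr rfl (fun v _ => pow_mul_ite (eps (σ v)) (u = v) k),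
      Finset.prod_ite_eq]
    simp
  calc ∏ e, (eps (σ (s e)) * eps (σ (t e))) ^ m e
      = ∏ e, ∏ v, eps (σ v) ^
          (m e * ((if s e = v then 1 else 0) + (if t e = v then 1 else 0))) := by
        refine Finset.prod_congr rfl fun e _ => ?_
        rw [mul_pow, hone (s e) (m e), hone (t e) (m e), ← Finset.prod_mul_distrib]
        refine Finset.prod_congr rfl fun v _ => ?_
        rw [← pow_add, mul_add]
    _ = ∏ v, ∏ e, eps (σ v) ^
          (m e * ((if s e = v then 1 else 0) + (if t e = v then 1 else 0))) :=
        Finset.prod_comm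
    _ = ∏ v, eps (σ v) ^ mDeg s t m v := by
        refine Finset.prod_congr rfl fun v _ => ?_
        rw [Finset.prod_pow_eq_pow_sum]
        rfl

lemma poissonWt_eq {E : Type} [Fintype E] (lam : E → ℝ) (m : E → ℕ) :
    (∏ e, lam e ^ m e / (Nat.factorial (m e) : ℝ))
      = Real.exp (∑ e, lam e) * poissonWt lam m := by
  have h1 : poissonWt lam m
      = (∏ e, Real.exp (-lam e)) * ∏ e, lam e ^ m e / (Nat.factorial (m e) : ℝ) := by
    rw [← Finset.prod_mul_distrib]
    exact Finset.prod_congr rfl fun e _ => (mul_div_assoc _ _ _)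
  have h2 : (∏ e, Real.exp (-lam e)) = Real.exp (-∑ e, lam e) := by
    rw [← Real.exp_sum, Finset.sum_neg_distrib]
  rw [h1, h2, ← mul_assoc, ← Real.exp_add]
  simp

lemma master {V E : Type} [Fintype V] [DecidableEq V] [Fintype E]
    (s t : E → V) (lam : E → ℝ) (w : V → ℕ) :
    (∑ σ : V → Fin 2, (∏ v, eps (σ v) ^ w v) *
        ∏ e, Real.exp (lam e * (eps (σ (s e)) * eps (σ (t e)))))
      = Real.exp (∑ e, lam e) * 2 ^ Fintype.card V *
          ∑' m : E → ℕ, poissonWt lam m *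
            (if ∀ v, Even (mDeg s t m v + w v) then 1 else 0) := by
  have hexp : ∀ x : ℝ, Real.exp x = ∑' n : ℕ, x ^ n / (Nat.factorial n : ℝ) := by
    intro x
    rw [Real.exp_eq_exp_ℝ, NormedSpace.exp_eq_tsum_div]
  have hgsum : ∀ (σ : V → Fin 2) (e : E), Summable fun n : ℕ =>
      |lam e ^ n * (eps (σ (s e)) * eps (σ (t e))) ^ n / (Nat.factorial n : ℝ)| := by
    intro σ e
    refine (Real.summable_pow_div_factorial
      |lam e * (eps (σ (s e)) * eps (σ (t e)))|).congr fun n => ?_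
    rw [abs_div, Nat.abs_cast, ← mul_pow, abs_pow]
  have hσ : ∀ σ : V → Fin 2,
      (∏ v, eps (σ v) ^ w v) *
          ∏ e, Real.exp (lam e * (eps (σ (s e)) * eps (σ (t e))))
        = ∑' m : E → ℕ, (∏ v, eps (σ v) ^ w v) *
            ∏ e, (lam e ^ m e * (eps (σ (s e)) * eps (σ (t e))) ^ m e /
              (Nat.factorial (m e) : ℝ)) := by
    intro σ
    obtain ⟨_, hEq⟩ := tsum_pi_prod
      (fun e n => lam e ^ n * (eps (σ (s e)) * eps (σ (t e))) ^ n / (Nat.factorial n : ℝ))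
      (hgsum σ)
    have h1 : ∀ e, Real.exp (lam e * (eps (σ (s e)) * eps (σ (t e))))
        = ∑' n : ℕ, lam e ^ n * (eps (σ (s e)) * eps (σ (t e))) ^ n /
            (Nat.factorial n : ℝ) := by
      intro e
      rw [hexp]
      exact tsum_congr fun n => by rw [mul_pow]
    rw [Finset.prod_congr rfl fun e _ => h1 e, ← hEq, tsum_mul_left]
  have hsummable : ∀ σ : V → Fin 2, Summable fun m : E → ℕ =>
      (∏ v, eps (σ v) ^ w v) *
        ∏ e, (lam e ^ m e * (eps (σ (s e)) * eps (σ (t e))) ^ m e /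
          (Nat.factorial (m e) : ℝ)) := by
    intro σ
    exact ((tsum_pi_prod _ (hgsum σ)).1.of_abs).mul_left _
  have hin : ∀ m : E → ℕ,
      (∑ σ : V → Fin 2, (∏ v, eps (σ v) ^ w v) *
          ∏ e, (lam e ^ m e * (eps (σ (s e)) * eps (σ (t e))) ^ m e /
            (Nat.factorial (m e) : ℝ)))
        = Real.exp (∑ e, lam e) * 2 ^ Fintype.card V *
            (poissonWt lam m * (if ∀ v, Even (mDeg s t m v + w v) then 1 else 0)) := by
    intro m
    have h2 : ∀ σ : V → Fin 2,
        (∏ v, eps (σ v) ^ w v) *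
            ∏ e, (lam e ^ m e * (eps (σ (s e)) * eps (σ (t e))) ^ m e /
              (Nat.factorial (m e) : ℝ))
          = (∏ e, lam e ^ m e / (Nat.factorial (m e) : ℝ)) *
              ∏ v, eps (σ v) ^ (mDeg s t m v + w v) := by
      intro σ
      have h3 : (∏ e, (lam e ^ m e * (eps (σ (s e)) * eps (σ (t e))) ^ m e /
            (Nat.factorial (m e) : ℝ)))
          = (∏ e, lam e ^ m e / (Nat.factorial (m e) : ℝ)) *
              ∏ e, (eps (σ (s e)) * eps (σ (t e))) ^ m e := by
        rw [← Finset.prod_mul_distrib]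
        exact Finset.prod_congr rfl fun e _ => by ring
      rw [h3, prod_eps]
      simp only [pow_add, Finset.prod_mul_distrib]
      ring
    rw [Finset.sum_congr rfl fun σ _ => h2 σ, ← Finset.mul_sum, sum_prod_eps, poissonWt_eq]
    by_cases h : ∀ v, Even (mDeg s t m v + w v)
    · rw [if_pos h, if_pos h]; ring
    · rw [if_neg h, if_neg h]; ring
  calc (∑ σ : V → Fin 2, (∏ v, eps (σ v) ^ w v) *
        ∏ e, Real.exp (lam e * (eps (σ (s e)) * eps (σ (t e)))))
      = ∑ σ : V → Fin 2, ∑' m : E → ℕ, (∏ v, eps (σ v) ^ w v) *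
          ∏ e, (lam e ^ m e * (eps (σ (s e)) * eps (σ (t e))) ^ m e /
            (Nat.factorial (m e) : ℝ)) := Finset.sum_congr rfl fun σ _ => hσ σ
    _ = ∑' m : E → ℕ, ∑ σ : V → Fin 2, (∏ v, eps (σ v) ^ w v) *
          ∏ e, (lam e ^ m e * (eps (σ (s e)) * eps (σ (t e))) ^ m e /
            (Nat.factorial (m e) : ℝ)) := (Summable.tsum_finsetSum fun σ _ => hsummable σ).symm
    _ = ∑' m : E → ℕ, Real.exp (∑ e, lam e) * 2 ^ Fintype.card V *
          (poissonWt lam m * (if ∀ v, Even (mDeg s t m v + w v) then 1 else 0)) :=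
        tsum_congr hin
    _ = _ := tsum_mul_left

end IsingAux
end IsingAux


/-- For the Ising model (`q = 2`), the two-point function equals the ratio of the
probability that the Poisson graph `G_P^{x,y}` is even to the probability that
`G_P` is even. -/
theorem ising_correlation_eq_even_ratio
    (V E : Type) [Fintype V] [DecidableEq V] [Fintype E]
    (s t : E → V) (hloop : ∀ e, s e ≠ t e)
    (β : ℝ) (hβ : 0 < β) (J : E → ℝ) (hJ : ∀ e, 0 ≤ J e)
    (lam : E → ℝ) (hlam : ∀ e, lam e = β * J e)
    (x y : V) (hxy : x ≠ y) :
    pottsTwoPoint s t 2 β J x y =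
      poissonProb lam (fun m => IsEvenMxy s t m x y) /
        poissonProb lam (fun m => IsEvenM s t m) := by
  classical
  have hwt : ∀ σ : V → Fin 2, pottsWt s t 2 β J σ
      = ∏ e, Real.exp (lam e * (IsingAux.eps (σ (s e)) * IsingAux.eps (σ (t e)))) := by
    intro σ
    unfold pottsWt
    rw [Real.exp_sum]
    refine Finset.prod_congr rfl fun e _ => ?_
    congr 1
    rw [hlam e]
    push_cast
    rw [IsingAux.two_delta (σ (s e)) (σ (t e))]
  have hcoef : ∀ σ : V → Fin 2,
      (((2:ℕ):ℝ) * (if σ x = σ y then 1 else 0) - 1)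
        = ∏ v, IsingAux.eps (σ v) ^
            (((if v = x then 1 else 0) + (if v = y then 1 else 0)) : ℕ) := by
    intro σ
    have h1 : (∏ v, IsingAux.eps (σ v) ^
          (((if v = x then 1 else 0) + (if v = y then 1 else 0)) : ℕ))
        = IsingAux.eps (σ x) * IsingAux.eps (σ y) := by
      simp only [pow_add, Finset.prod_mul_distrib]
      rw [IsingAux.prod_eps_single, IsingAux.prod_eps_single]
    rw [h1]
    push_cast
    exact IsingAux.two_delta (σ x) (σ y)
  have hZ : pottsZ V s t 2 β J
      = Real.exp (∑ e, lam e) * 2 ^ Fintype.card V *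
          poissonProb lam (fun m => IsEvenM s t m) := by
    have hm := IsingAux.master s t lam (fun _ => 0)
    simp only [pow_zero, Finset.prod_const_one, one_mul, Nat.add_zero] at hm
    have hps : poissonProb lam (fun m => IsEvenM s t m)
        = ∑' m : E → ℕ, poissonWt lam m *
            (if ∀ v, Even (mDeg s t m v) then 1 else 0) := by
      unfold poissonProb
      refine tsum_congr fun m => ?_
      congr 1
      refine if_congr ?_ rfl rfl
      exact Iff.rfl
    rw [hps]
    unfold pottsZ
    rw [Finset.sum_congr rfl fun σ _ => hwt σ, hm]
  have hNum : (∑ σ : V → Fin 2,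
        (((2:ℕ):ℝ) * (if σ x = σ y then 1 else 0) - 1) * pottsWt s t 2 β J σ)
      = Real.exp (∑ e, lam e) * 2 ^ Fintype.card V *
          poissonProb lam (fun m => IsEvenMxy s t m x y) := by
    have hm := IsingAux.master s t lam
      (fun v => (if v = x then 1 else 0) + (if v = y then 1 else 0))
    have hps : poissonProb lam (fun m => IsEvenMxy s t m x y)
        = ∑' m : E → ℕ, poissonWt lam m *
            (if ∀ v, Even (mDeg s t m v +
              ((if v = x then 1 else 0) + (if v = y then 1 else 0))) then 1 else 0) := by
      unfold poissonProb
      refine tsum_congr fun m => ?_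
      congr 1
      refine if_congr ?_ rfl rfl
      unfold IsEvenMxy
      exact forall_congr' fun v => by rw [add_assoc]
    rw [hps]
    rw [Finset.sum_congr rfl fun σ _ => by rw [hwt σ, hcoef σ], hm]
  unfold pottsTwoPoint
  rw [hNum, hZ]
  exact mul_div_mul_left _ _ (by positivity)
end

section
/- Let G=(V,E) be a finite graph without loops, q ∈ {2,3,…}, β > 0, J=(J_e : e∈E) non-negative reals, and set λ_e = βJ_e. Then exp(−β Σ_{e∈E} J_e) · Z_P = q^{|V|} E_λ(C(G_P;q)), where Z_P = Σ_{σ∈{1,…,q}^V} exp(Σ_{e∈E} βJ_e (q δ_e(σ) − 1)) is the Potts partition function. -/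
open scoped BigOperators symmDiff Classical

section AuxFlows
open Finset

private lemma char_sums (q : ℕ) [NeZero q] :
    ∃ ψ : AddChar (ZMod q) ℂ,
      (∀ x : ZMod q, (∑ k : ZMod q, ψ (k * x)) = (q : ℂ) * (if x = 0 then 1 else 0)) ∧
      (∀ x : ZMod q, (∑ k ∈ Finset.univ.erase (0 : ZMod q), ψ (k * x))
          = (q : ℂ) * (if x = 0 then 1 else 0) - 1) := by
  have hq0 : (q : ℕ) ≠ 0 := NeZero.ne q
  have hprimroot := Complex.isPrimitiveRoot_exp q hq0
  have hζ : (Complex.exp (2 * Real.pi * Complex.I / q)) ^ q = 1 := hprimroot.pow_eq_one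
  have hprim : AddChar.IsPrimitive (AddChar.zmodChar q hζ) :=
    AddChar.zmodChar_primitive_of_primitive_root q hprimroot
  set ψ := AddChar.zmodChar q hζ with hψdef
  have hfull : ∀ x : ZMod q, (∑ k : ZMod q, ψ (k * x)) = (q : ℂ) * (if x = 0 then 1 else 0) := by
    intro x
    have h1 : (∑ k : ZMod q, ψ (k * x)) = ∑ k : ZMod q, (AddChar.mulShift ψ x) k := by
      refine Finset.sum_congr rfl fun k _ => ?_
      rw [AddChar.mulShift_apply, mul_comm]
    rw [h1, AddChar.sum_eq_ite]
    by_cases hx : x = 0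
    · subst hx
      rw [if_pos, if_pos rfl, mul_one, ZMod.card]
      rw [AddChar.mulShift_zero, AddChar.one_eq_zero]
    · rw [if_neg, if_neg hx, mul_zero]
      rw [← AddChar.one_eq_zero]
      exact hprim hx
  refine ⟨ψ, hfull, fun x => ?_⟩
  have h0 : (0 : ZMod q) ∈ (Finset.univ : Finset (ZMod q)) := Finset.mem_univ 0
  have := Finset.sum_erase_eq_sub (f := fun k : ZMod q => ψ (k * x)) h0
  rw [this, hfull x]
  simp

private lemma addChar_map_sum {A M : Type*} [AddCommMonoid A] [CommMonoid M] (ψ : AddChar A M)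
    {ι : Type*} (s : Finset ι) (g : ι → A) :
    ψ (∑ i ∈ s, g i) = ∏ i ∈ s, ψ (g i) := by
  induction s using Finset.cons_induction with
  | empty => simp
  | cons a s ha ih => rw [Finset.sum_cons, Finset.prod_cons, AddChar.map_add_eq_mul, ih]

private lemma sum_prod_eq_flowCountC (V : Type) [Fintype V] [DecidableEq V]
    {ι : Type} [Fintype ι] (s t : ι → V) (q : ℕ) [NeZero q] :
    ∑ σ : V → ZMod q, ∏ i, ((q : ℂ) * (if σ (s i) = σ (t i) then 1 else 0) - 1)
      = (q : ℂ) ^ (Fintype.card V) * (flowCount V s t q : ℂ) := by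
  obtain ⟨ψ, hfull, herase⟩ := char_sums q
  have hA : ∀ (σ : V → ZMod q) (i : ι),
      ((q : ℂ) * (if σ (s i) = σ (t i) then 1 else 0) - 1)
        = ∑ k ∈ Finset.univ.erase (0 : ZMod q), ψ (k * (σ (s i) - σ (t i))) := by
    intro σ i
    rw [herase]
    simp [sub_eq_zero]
  have step1 : ∑ σ : V → ZMod q, ∏ i, ((q : ℂ) * (if σ (s i) = σ (t i) then 1 else 0) - 1)
      = ∑ f ∈ Fintype.piFinset (fun _ : ι => Finset.univ.erase (0 : ZMod q)),
          ∑ σ : V → ZMod q, ∏ i, ψ (f i * (σ (s i) - σ (t i))) := by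
    rw [Finset.sum_comm]
    refine Finset.sum_congr rfl fun σ _ => ?_
    simp_rw [hA σ]
    exact Finset.prod_univ_sum _ _
  rw [step1]
  have step2 : ∀ f : ι → ZMod q,
      ∑ σ : V → ZMod q, ∏ i, ψ (f i * (σ (s i) - σ (t i)))
        = (q : ℂ) ^ (Fintype.card V) *
            (if (∀ v : V, (∑ i, if s i = v then f i else 0)
                = (∑ i, if t i = v then f i else 0)) then 1 else 0) := by
    intro f
    set d : V → ZMod q := fun v =>
      (∑ i, if s i = v then f i else 0) - (∑ i, if t i = v then f i else 0) with hd
    have key1 : ∀ σ : V → ZMod q,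
        (∑ i, f i * (σ (s i) - σ (t i))) = ∑ v, σ v * d v := by
      intro σ
      have hs : ∀ u : ι → V, ∑ i, f i * σ (u i)
          = ∑ v, σ v * ∑ i, (if u i = v then f i else 0) := by
        intro u
        calc ∑ i, f i * σ (u i) = ∑ i, ∑ v, (if u i = v then f i * σ v else 0) := by
              refine Finset.sum_congr rfl fun i _ => ?_
              rw [Finset.sum_ite_eq]
              simp
          _ = ∑ v, ∑ i, (if u i = v then f i * σ v else 0) := Finset.sum_comm
          _ = ∑ v, σ v * ∑ i, (if u i = v then f i else 0) := by
              refine Finset.sum_congr rfl fun v _ => ?_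
              rw [Finset.mul_sum]
              refine Finset.sum_congr rfl fun i _ => ?_
              split_ifs <;> ring
      simp_rw [mul_sub, Finset.sum_sub_distrib, hs s, hs t, hd]
      rw [← Finset.sum_sub_distrib]
      exact Finset.sum_congr rfl fun v _ => (mul_sub _ _ _).symm
    calc ∑ σ : V → ZMod q, ∏ i, ψ (f i * (σ (s i) - σ (t i)))
        = ∑ σ : V → ZMod q, ∏ v, ψ (σ v * d v) := by
          refine Finset.sum_congr rfl fun σ _ => ?_
          rw [← addChar_map_sum, ← addChar_map_sum, key1 σ]
      _ = ∏ v, ∑ a : ZMod q, ψ (a * d v) := by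
          have h := Finset.prod_univ_sum (fun _ : V => (Finset.univ : Finset (ZMod q)))
            (fun v a => ψ (a * d v))
          rw [Fintype.piFinset_univ] at h
          exact h.symm
      _ = ∏ v, ((q : ℂ) * (if d v = 0 then 1 else 0)) :=
          Finset.prod_congr rfl fun v _ => hfull (d v)
      _ = (q : ℂ) ^ (Fintype.card V) * ∏ v, (if d v = 0 then (1 : ℂ) else 0) := by
          rw [Finset.prod_mul_distrib, Finset.prod_const, Finset.card_univ]
      _ = (q : ℂ) ^ (Fintype.card V) *
            (if (∀ v : V, (∑ i, if s i = v then f i else 0)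
                = (∑ i, if t i = v then f i else 0)) then 1 else 0) := by
          rw [Finset.prod_boole]
          congr 1
          simp [hd, sub_eq_zero]
  simp_rw [step2]
  rw [← Finset.mul_sum, Finset.sum_boole]
  congr 1
  have hset : (Fintype.piFinset fun _ : ι => Finset.univ.erase (0 : ZMod q)).filter
      (fun f : ι → ZMod q => ∀ v : V, (∑ i, if s i = v then f i else 0)
        = (∑ i, if t i = v then f i else 0))
      = Finset.univ.filter (fun f : ι → ZMod q => (∀ i, f i ≠ 0) ∧
          ∀ v : V, (∑ i, if s i = v then f i else 0) = (∑ i, if t i = v then f i else 0)) := by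
    ext f
    simp [Fintype.mem_piFinset, and_comm]
  rw [hset, flowCount, Nat.card_eq_fintype_card, Fintype.card_subtype]

private lemma sum_prod_eq_flowCountR (V : Type) [Fintype V] [DecidableEq V]
    {ι : Type} [Fintype ι] (s t : ι → V) (q : ℕ) [NeZero q] :
    ∑ σ : V → ZMod q, ∏ i, ((q : ℝ) * (if σ (s i) = σ (t i) then 1 else 0) - 1)
      = (q : ℝ) ^ (Fintype.card V) * (flowCount V s t q : ℝ) := by
  have h := sum_prod_eq_flowCountC V s t q
  apply Complex.ofReal_injective
  push_cast [apply_ite (Complex.ofReal)]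
  exact h

/-- The weight `q·δ_e(σ) - 1` of an edge in a spin configuration. -/
noncomputable def spinA (q : ℕ) {V E : Type} (s t : E → V) (σ : V → ZMod q) (e : E) : ℝ :=
  (q : ℝ) * (if σ (s e) = σ (t e) then 1 else 0) - 1

/-- The summand of the per-edge Poisson series. -/
noncomputable def spinG (q : ℕ) {V E : Type} (s t : E → V) (lam : E → ℝ)
    (σ : V → ZMod q) (e : E) (k : ℕ) : ℝ :=
  Real.exp (-lam e) * lam e ^ k / (Nat.factorial k : ℝ) * (spinA q s t σ e) ^ k

private lemma sum_prod_eq_flowCountM (V E : Type) [Fintype V] [DecidableEq V] [Fintype E]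
    (s t : E → V) (q : ℕ) [NeZero q] (m : E → ℕ) :
    ∑ σ : V → ZMod q, ∏ e, (spinA q s t σ e) ^ (m e)
      = (q : ℝ) ^ (Fintype.card V) * (flowCountM s t m q : ℝ) := by
  have h := sum_prod_eq_flowCountR V (fun x : Σ e : E, Fin (m e) => s x.1)
    (fun x : Σ e : E, Fin (m e) => t x.1) q
  rw [flowCountM]
  rw [← h]
  refine Finset.sum_congr rfl fun σ _ => ?_
  rw [← Finset.univ_sigma_univ, Finset.prod_sigma]
  refine Finset.prod_congr rfl fun e _ => ?_
  simp [spinA, Finset.prod_const]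

private lemma tsum_pi_prod_fin : ∀ (n : ℕ) (f : Fin n → ℕ → ℝ),
    (∀ e, Summable fun k => |f e k|) →
    (Summable fun m : Fin n → ℕ => |∏ e, f e (m e)|) ∧
      (∑' m : Fin n → ℕ, ∏ e, f e (m e)) = ∏ e, ∑' k, f e k := by
  intro n
  induction n with
  | zero =>
    intro f _
    refine ⟨Summable.of_finite, ?_⟩
    have h1 : ∀ m : Fin 0 → ℕ, (∏ e, f e (m e)) = 1 := by
      intro m; rw [Finset.univ_eq_empty, Finset.prod_empty]
    rw [tsum_congr h1, tsum_eq_single (fun _ => 0)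
      (fun b hb => (hb (Subsingleton.elim _ _)).elim)]
    rw [Finset.univ_eq_empty, Finset.prod_empty]
  | succ n ih =>
    intro f hf
    obtain ⟨ihS, ihT⟩ := ih (fun i => f i.succ) (fun i => hf i.succ)
    set Φ : ℕ × (Fin n → ℕ) ≃ (Fin (n + 1) → ℕ) := Fin.consEquiv (fun _ => ℕ) with hΦ
    have hcomp : ∀ p : ℕ × (Fin n → ℕ),
        (∏ e, f e (Φ p e)) = f 0 p.1 * ∏ i, f i.succ (p.2 i) := by
      intro p
      rw [Fin.prod_univ_succ]
      simp [hΦ, Fin.consEquiv]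
    have hSprod : Summable fun p : ℕ × (Fin n → ℕ) => |f 0 p.1| * |∏ i, f i.succ (p.2 i)| := by
      have := summable_mul_of_summable_norm (R := ℝ)
        (f := fun k => |f 0 k|) (g := fun m : Fin n → ℕ => |∏ i, f i.succ (m i)|)
        (by simpa using (hf 0)) (by simpa using ihS)
      exact this
    have hSabs : Summable fun p : ℕ × (Fin n → ℕ) => |∏ e, f e (Φ p e)| := by
      refine hSprod.congr fun p => ?_
      rw [hcomp, abs_mul]
    have hS : Summable fun m : Fin (n + 1) → ℕ => |∏ e, f e (m e)| :=
      (Φ.summable_iff (f := fun m : Fin (n + 1) → ℕ => |∏ e, f e (m e)|)).mp hSabs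
    refine ⟨hS, ?_⟩
    have hSum : Summable fun p : ℕ × (Fin n → ℕ) => f 0 p.1 * ∏ i, f i.succ (p.2 i) :=
      Summable.of_abs (hSprod.congr fun p => (abs_mul _ _).symm)
    calc (∑' m : Fin (n + 1) → ℕ, ∏ e, f e (m e))
        = ∑' p : ℕ × (Fin n → ℕ), ∏ e, f e (Φ p e) :=
          (Φ.tsum_eq (f := fun m : Fin (n + 1) → ℕ => ∏ e, f e (m e))).symm
      _ = ∑' p : ℕ × (Fin n → ℕ), f 0 p.1 * ∏ i, f i.succ (p.2 i) := tsum_congr hcomp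
      _ = ∑' k : ℕ, ∑' m : Fin n → ℕ, f 0 k * ∏ i, f i.succ (m i) := Summable.tsum_prod hSum
      _ = ∑' k : ℕ, f 0 k * ∑' m : Fin n → ℕ, ∏ i, f i.succ (m i) :=
          tsum_congr fun k => tsum_mul_left
      _ = (∑' k : ℕ, f 0 k) * ∑' m : Fin n → ℕ, ∏ i, f i.succ (m i) := tsum_mul_right
      _ = ∏ e, ∑' k, f e k := by
          rw [ihT, Fin.prod_univ_succ]

private lemma tsum_pi_prod {E : Type} [Fintype E] (f : E → ℕ → ℝ)
    (hf : ∀ e, Summable fun k => |f e k|) :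
    (Summable fun m : E → ℕ => |∏ e, f e (m e)|) ∧
      (∑' m : E → ℕ, ∏ e, f e (m e)) = ∏ e, ∑' k, f e k := by
  obtain ⟨n, ⟨e⟩⟩ : ∃ n, Nonempty (E ≃ Fin n) := ⟨Fintype.card E, ⟨Fintype.equivFin E⟩⟩
  obtain ⟨hS, hT⟩ := tsum_pi_prod_fin n (fun i => f (e.symm i)) (fun i => hf _)
  set Φ : (Fin n → ℕ) ≃ (E → ℕ) := Equiv.arrowCongr e.symm (Equiv.refl ℕ) with hΦ
  have hΦap : ∀ (g : Fin n → ℕ) (x : E), Φ g x = g (e x) := by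
    intro g x; simp [hΦ]
  have hcomp : ∀ g : Fin n → ℕ, (∏ x, f x (Φ g x)) = ∏ i, f (e.symm i) (g i) := by
    intro g
    refine Fintype.prod_equiv e _ _ fun x => ?_
    rw [hΦap, e.symm_apply_apply]
  constructor
  · exact (Φ.summable_iff (f := fun m : E → ℕ => |∏ x, f x (m x)|)).mp
      (hS.congr fun g => by simp only [Function.comp_apply]; rw [hcomp])
  · calc (∑' m : E → ℕ, ∏ x, f x (m x))
        = ∑' g : Fin n → ℕ, ∏ x, f x (Φ g x) :=
          (Φ.tsum_eq (f := fun m : E → ℕ => ∏ x, f x (m x))).symm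
      _ = ∑' g : Fin n → ℕ, ∏ i, f (e.symm i) (g i) := tsum_congr hcomp
      _ = ∏ i, ∑' k, f (e.symm i) k := hT
      _ = ∏ x, ∑' k, f x k := Fintype.prod_equiv e.symm _ _ fun i => rfl

private lemma edge_series (lam c : ℝ) :
    (Summable fun k : ℕ => |Real.exp (-lam) * lam ^ k / (Nat.factorial k : ℝ) * c ^ k|) ∧
      (∑' k : ℕ, Real.exp (-lam) * lam ^ k / (Nat.factorial k : ℝ) * c ^ k)
        = Real.exp (-lam) * Real.exp (lam * c) := by
  have h1 : ∀ k : ℕ, Real.exp (-lam) * lam ^ k / (Nat.factorial k : ℝ) * c ^ k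
      = Real.exp (-lam) * ((lam * c) ^ k / (Nat.factorial k : ℝ)) := by
    intro k
    rw [mul_pow]
    ring
  have h2 : ∀ k : ℕ, |Real.exp (-lam) * lam ^ k / (Nat.factorial k : ℝ) * c ^ k|
      = Real.exp (-lam) * (|lam * c| ^ k / (Nat.factorial k : ℝ)) := by
    intro k
    rw [h1, abs_mul, abs_div, abs_pow, abs_mul, Real.abs_exp, Nat.abs_cast]
  constructor
  · exact (((Real.summable_pow_div_factorial |lam * c|).mul_left
      (Real.exp (-lam)))).congr fun k => (h2 k).symm
  · rw [tsum_congr h1, tsum_mul_left]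
    congr 1
    rw [Real.exp_eq_exp_ℝ, NormedSpace.exp_eq_tsum_div]

end AuxFlows

/-- `exp(-β ∑_e J_e) · Z_P = q^{|V|} E_λ(C(G_P; q))` where `λ_e = β J_e`. -/
theorem potts_partition_eq_flow_expectation
    (V E : Type) [Fintype V] [DecidableEq V] [Fintype E]
    (s t : E → V) (hloop : ∀ e, s e ≠ t e)
    (q : ℕ) (hq : 2 ≤ q) (β : ℝ) (hβ : 0 < β)
    (J : E → ℝ) (hJ : ∀ e, 0 ≤ J e)
    (lam : E → ℝ) (hlam : ∀ e, lam e = β * J e) :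
    Real.exp (-(β * ∑ e, J e)) * pottsZ V s t q β J
      = (q : ℝ) ^ (Fintype.card V) *
          poissonExp lam (fun m => (flowCountM s t m q : ℝ)) := by
  haveI : NeZero q := ⟨by omega⟩
  have hgsum : ∀ (σ : V → ZMod q) (e : E), Summable fun k => |spinG q s t lam σ e k| := by
    intro σ e
    have := (edge_series (lam e) (spinA q s t σ e)).1
    exact this.congr fun k => by rw [spinG]
  have hlsum : (∑ e, lam e) = β * ∑ e, J e := by
    rw [Finset.mul_sum]; exact Finset.sum_congr rfl fun e _ => hlam e
  have hR1 : ∀ m : E → ℕ,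
      (q : ℝ) ^ (Fintype.card V) * (poissonWt lam m * (flowCountM s t m q : ℝ))
        = ∑ σ : V → ZMod q, ∏ e, spinG q s t lam σ e (m e) := by
    intro m
    have h4 := sum_prod_eq_flowCountM V E s t q m
    calc (q : ℝ) ^ (Fintype.card V) * (poissonWt lam m * (flowCountM s t m q : ℝ))
        = poissonWt lam m * ((q : ℝ) ^ (Fintype.card V) * (flowCountM s t m q : ℝ)) := by ring
      _ = poissonWt lam m * ∑ σ : V → ZMod q, ∏ e, (spinA q s t σ e) ^ (m e) := by rw [← h4]
      _ = ∑ σ : V → ZMod q, poissonWt lam m * ∏ e, (spinA q s t σ e) ^ (m e) :=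
          Finset.mul_sum _ _ _
      _ = ∑ σ : V → ZMod q, ∏ e, spinG q s t lam σ e (m e) := by
          refine Finset.sum_congr rfl fun σ _ => ?_
          rw [poissonWt, ← Finset.prod_mul_distrib]
          exact Finset.prod_congr rfl fun e _ => by rw [spinG]
  have key : (q : ℝ) ^ (Fintype.card V) * poissonExp lam (fun m => (flowCountM s t m q : ℝ))
      = ∑ τ : V → ZMod q,
          Real.exp ((∑ e, lam e * spinA q s t τ e) - ∑ e, lam e) := by
    calc (q : ℝ) ^ (Fintype.card V) * poissonExp lam (fun m => (flowCountM s t m q : ℝ))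
        = ∑' m : E → ℕ, (q : ℝ) ^ (Fintype.card V)
            * (poissonWt lam m * (flowCountM s t m q : ℝ)) := by
          rw [poissonExp]; exact tsum_mul_left.symm
      _ = ∑' m : E → ℕ, ∑ σ : V → ZMod q, ∏ e, spinG q s t lam σ e (m e) := tsum_congr hR1
      _ = ∑ σ : V → ZMod q, ∑' m : E → ℕ, ∏ e, spinG q s t lam σ e (m e) :=
          Summable.tsum_finsetSum fun σ _ => Summable.of_abs (tsum_pi_prod (spinG q s t lam σ) (hgsum σ)).1
      _ = ∑ σ : V → ZMod q, ∏ e, ∑' k, spinG q s t lam σ e k :=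
          Finset.sum_congr rfl fun σ _ => (tsum_pi_prod (spinG q s t lam σ) (hgsum σ)).2
      _ = ∑ σ : V → ZMod q, ∏ e, (Real.exp (-lam e) * Real.exp (lam e * spinA q s t σ e)) := by
          refine Finset.sum_congr rfl fun σ _ => Finset.prod_congr rfl fun e _ => ?_
          rw [tsum_congr fun k => by rw [spinG]]
          exact (edge_series (lam e) (spinA q s t σ e)).2
      _ = ∑ τ : V → ZMod q,
            Real.exp ((∑ e, lam e * spinA q s t τ e) - ∑ e, lam e) := by
          refine Finset.sum_congr rfl fun σ _ => ?_
          calc ∏ e, (Real.exp (-lam e) * Real.exp (lam e * spinA q s t σ e))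
              = ∏ e, Real.exp (lam e * spinA q s t σ e - lam e) := by
                refine Finset.prod_congr rfl fun e _ => ?_
                rw [← Real.exp_add]
                congr 1
                ring
            _ = Real.exp (∑ e, (lam e * spinA q s t σ e - lam e)) := (Real.exp_sum _ _).symm
            _ = Real.exp ((∑ e, lam e * spinA q s t σ e) - ∑ e, lam e) := by
                rw [Finset.sum_sub_distrib]
  have hcard : Fintype.card (Fin q) = Fintype.card (ZMod q) := by simp [ZMod.card]
  set ε : (V → Fin q) ≃ (V → ZMod q) :=
    Equiv.arrowCongr (Equiv.refl V) (Fintype.equivOfCardEq hcard) with hε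
  have hper : ∀ σ : V → Fin q,
      pottsWt s t q β J σ = Real.exp (∑ e, lam e * spinA q s t (ε σ) e) := by
    intro σ
    rw [pottsWt]
    congr 1
    refine Finset.sum_congr rfl fun e _ => ?_
    have hiff : σ (s e) = σ (t e) ↔ (ε σ) (s e) = (ε σ) (t e) := by
      simp [hε]
    rw [hlam, spinA]
    by_cases h : σ (s e) = σ (t e)
    · rw [if_pos h, if_pos (hiff.mp h)]
    · rw [if_neg h, if_neg fun hc => h (hiff.mpr hc)]
  have key2 : ∑ τ : V → ZMod q,
        Real.exp ((∑ e, lam e * spinA q s t τ e) - ∑ e, lam e)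
      = Real.exp (-(β * ∑ e, J e)) * pottsZ V s t q β J := by
    rw [pottsZ, Finset.mul_sum]
    refine (Fintype.sum_equiv ε _ _ fun σ => ?_).symm
    rw [hper σ, hlsum, ← Real.exp_add]
    congr 1
    ring
  rw [key, key2]
end

section
/- Let G=(V,E) be a finite graph without loops and p ∈ [0,1). Then Σ_{ω∈{0,1}^E} p^{|η(ω)|}(1−p)^{|E∖η(ω)|} 2^{k(ω)} = 2^{|V|} · φ_{p/2}(the graph (V, η(ω)) of open edges is even), where φ_{p/2} is the product measure on {0,1}^E under which each edge is independently open with probability p/2. -/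
open scoped BigOperators symmDiff Classical

section AuxPerc2k

open scoped Classical

private lemma aux_sum_bool {E : Type} [Fintype E] (f : E → Bool → ℝ) :
    ∑ ω : E → Bool, ∏ e, f e (ω e) = ∏ e, (f e true + f e false) := by
  rw [← Fintype.piFinset_univ, Finset.sum_prod_piFinset]
  simp

private lemma aux_zmod2_sum' {V : Type} [Fintype V] [DecidableEq V] (f : V → ZMod 2 → ℝ) :
    ∑ σ : V → ZMod 2, ∏ v, f v (σ v) = ∏ v, (f v 0 + f v 1) := by
  rw [← Fintype.piFinset_univ, Finset.sum_prod_piFinset]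
  exact Finset.prod_congr rfl fun v _ => Fin.sum_univ_two (f v)

private lemma aux_card_comp {V E : Type} [Fintype V] [DecidableEq V] [Fintype E] (s t : E → V)
    (pred : E → Prop) :
    Nat.card {σ : V → ZMod 2 // ∀ e, pred e → σ (s e) = σ (t e)}
      = 2 ^ numComp s t pred := by
  have hconst : ∀ (σ : V → ZMod 2), (∀ e, pred e → σ (s e) = σ (t e)) →
      ∀ (v w : V) (q : (openGraph s t pred).Walk v w), q.IsPath → σ v = σ w := by
    intro σ hσ v w q hq
    clear hq
    induction q with
    | nil => rfl
    | cons h q ih =>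
      refine Eq.trans ?_ ih
      rcases h with ⟨hne, ⟨e, he, h1, h2⟩ | ⟨e, he, h1, h2⟩⟩
      · rw [← h1, ← h2]; exact hσ e he
      · rw [← h1, ← h2]; exact (hσ e he).symm
  have : {σ : V → ZMod 2 // ∀ e, pred e → σ (s e) = σ (t e)}
      ≃ ((openGraph s t pred).ConnectedComponent → ZMod 2) :=
    { toFun := fun σ => SimpleGraph.ConnectedComponent.lift σ.1 (hconst σ.1 σ.2)
      invFun := fun g => ⟨fun v => g ((openGraph s t pred).connectedComponentMk v), by
        intro e he
        by_cases h : s e = t e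
        · rw [h]
        · exact congrArg g <| SimpleGraph.ConnectedComponent.sound
            ((SimpleGraph.fromRel_adj (fun a b => ∃ e, pred e ∧ s e = a ∧ t e = b)
              (s e) (t e)).2 ⟨h, Or.inl ⟨e, he, rfl, rfl⟩⟩).reachable⟩
      left_inv := fun σ => Subtype.ext (funext fun v => rfl)
      right_inv := fun g => funext fun c => by
        induction c using SimpleGraph.ConnectedComponent.ind
        rfl }
  rw [Nat.card_eq_of_bijective _ this.bijective, Nat.card_fun]
  simp [numComp, Nat.card_eq_fintype_card]

private lemma aux_L3 {V : Type} [Fintype V] [DecidableEq V] (d : V → ℕ) :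
    ∑ σ : V → ZMod 2, ∏ v, (-1 : ℝ) ^ ((σ v).val * d v)
      = if (∀ v, Even (d v)) then (2 : ℝ) ^ Fintype.card V else 0 := by
  rw [aux_zmod2_sum' (fun v (x : ZMod 2) => (-1 : ℝ) ^ (x.val * d v))]
  simp only [ZMod.val_zero, ZMod.val_one, Nat.zero_mul, Nat.one_mul, pow_zero]
  split
  · next h =>
    rw [Finset.prod_congr rfl (fun v _ => by
      rw [(h v).neg_one_pow]; norm_num : ∀ v ∈ Finset.univ, _ = (2:ℝ))]
    simp
  · next h =>
    push_neg at h
    obtain ⟨v, hv⟩ := h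
    exact Finset.prod_eq_zero (Finset.mem_univ v)
      (by rw [(Nat.not_even_iff_odd.1 hv).neg_one_pow]; ring)

private lemma aux_L4 {V E : Type} [Fintype V] [Fintype E] [DecidableEq V] (s t : E → V)
    (ζ : E → Bool) (σ : V → ZMod 2) :
    ∏ v, (-1 : ℝ) ^ ((σ v).val * mDeg s t (fun e => if ζ e then 1 else 0) v)
      = ∏ e, (if ζ e then (-1 : ℝ) ^ ((σ (s e)).val + (σ (t e)).val) else 1) := by
  rw [Finset.prod_pow_eq_pow_sum]
  have : ∀ e ∈ Finset.univ, (if ζ e then (-1 : ℝ) ^ ((σ (s e)).val + (σ (t e)).val) else 1)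
      = (-1 : ℝ) ^ (if ζ e then (σ (s e)).val + (σ (t e)).val else 0) := by
    intro e _; split <;> simp
  rw [Finset.prod_congr rfl this, Finset.prod_pow_eq_pow_sum]
  congr 1
  simp only [mDeg, Finset.mul_sum]
  rw [Finset.sum_comm]
  refine Finset.sum_congr rfl fun e _ => ?_
  by_cases hz : ζ e
  · simp only [hz, if_true, one_mul, mul_add, mul_ite, mul_one, mul_zero,
      Finset.sum_add_distrib, Finset.sum_ite_eq, Finset.mem_univ, if_true]
  · simp [hz]

private lemma aux_edge (p : ℝ) (a b : ZMod 2) :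
    (p / 2) * (-1 : ℝ) ^ (a.val + b.val) + (1 - p / 2)
      = if a = b then (1 : ℝ) else 1 - p := by
  by_cases h : a = b
  · subst h
    rw [if_pos rfl, (Even.add_self a.val).neg_one_pow]
    ring
  · rw [if_neg h]
    have ha := a.val_lt
    have hb := b.val_lt
    have hne : a.val ≠ b.val := fun hv => h (ZMod.val_injective 2 hv)
    have : a.val + b.val = 1 := by omega
    rw [this, pow_one]
    ring

end AuxPerc2k
/-- `φ_p(2^{k(ω)}) = 2^{|V|} φ_{p/2}(the open graph on V is even)`. -/
theorem perc_2k_eq_even_half_density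
    (V E : Type) [Fintype V] [DecidableEq V] [Fintype E]
    (s t : E → V) (hloop : ∀ e, s e ≠ t e)
    (p : ℝ) (hp0 : 0 ≤ p) (hp1 : p < 1) :
    (∑ ω : E → Bool, percWt (fun _ => p) ω * (2 : ℝ) ^ numComp s t (fun e => ω e = true))
      = (2 : ℝ) ^ (Fintype.card V) *
          ∑ ζ : E → Bool,
            if IsEvenM s t (fun e => if ζ e then 1 else 0)
            then percWt (fun _ => p / 2) ζ else 0 := by
  classical
  have hL : (∑ ω : E → Bool, percWt (fun _ => p) ω *
        (2 : ℝ) ^ numComp s t (fun e => ω e = true))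
      = ∑ σ : V → ZMod 2, ∏ e, (if σ (s e) = σ (t e) then (1 : ℝ) else 1 - p) := by
    have h2k : ∀ ω : E → Bool, ((2 : ℝ) ^ numComp s t (fun e => ω e = true)) =
        ∑ σ : V → ZMod 2, (if ∀ e, ω e = true → σ (s e) = σ (t e) then (1 : ℝ) else 0) := by
      intro ω
      rw [Finset.sum_boole, ← Nat.cast_ofNat (n := 2), ← Nat.cast_pow,
        ← aux_card_comp s t (fun e => ω e = true), Nat.card_eq_fintype_card,
        Fintype.card_subtype]
    simp_rw [h2k, Finset.mul_sum]
    rw [Finset.sum_comm]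
    refine Finset.sum_congr rfl fun σ _ => ?_
    have hfac : ∀ ω : E → Bool,
        percWt (fun _ => p) ω *
            (if ∀ e, ω e = true → σ (s e) = σ (t e) then (1 : ℝ) else 0)
          = ∏ e, (if ω e then (if σ (s e) = σ (t e) then p else 0) else 1 - p) := by
      intro ω
      rw [percWt, ← Fintype.prod_boole (p := fun e => ω e = true → σ (s e) = σ (t e)),
        ← Finset.prod_mul_distrib]
      refine Finset.prod_congr rfl fun e _ => ?_
      by_cases hw : ω e <;> simp [hw]
    simp_rw [hfac]
    rw [aux_sum_bool (fun e b =>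
      if b then (if σ (s e) = σ (t e) then p else 0) else 1 - p)]
    refine Finset.prod_congr rfl fun e _ => ?_
    by_cases h : σ (s e) = σ (t e) <;> simp [h] <;> ring
  have hR : ((2 : ℝ) ^ (Fintype.card V) *
        ∑ ζ : E → Bool,
          if IsEvenM s t (fun e => if ζ e then 1 else 0)
          then percWt (fun _ => p / 2) ζ else 0)
      = ∑ σ : V → ZMod 2, ∏ e, (if σ (s e) = σ (t e) then (1 : ℝ) else 1 - p) := by
    rw [Finset.mul_sum]
    have step1 : ∀ ζ : E → Bool,
        (2 : ℝ) ^ (Fintype.card V) *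
            (if IsEvenM s t (fun e => if ζ e then 1 else 0)
              then percWt (fun _ => p / 2) ζ else 0)
          = ∑ σ : V → ZMod 2, percWt (fun _ => p / 2) ζ *
              ∏ e, (if ζ e then (-1 : ℝ) ^ ((σ (s e)).val + (σ (t e)).val) else 1) := by
      intro ζ
      have hsum := aux_L3 (mDeg s t (fun e => if ζ e then 1 else 0))
      calc (2 : ℝ) ^ (Fintype.card V) *
            (if IsEvenM s t (fun e => if ζ e then 1 else 0)
              then percWt (fun _ => p / 2) ζ else 0)
          = percWt (fun _ => p / 2) ζ *
              ∑ σ : V → ZMod 2, ∏ v,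
                (-1 : ℝ) ^ ((σ v).val * mDeg s t (fun e => if ζ e then 1 else 0) v) := by
            rw [hsum]
            unfold IsEvenM
            by_cases hev : ∀ v, Even (mDeg s t (fun e => if ζ e then 1 else 0) v)
            · simp only [if_pos hev]; ring
            · simp only [if_neg hev]; ring
        _ = ∑ σ : V → ZMod 2, percWt (fun _ => p / 2) ζ *
              ∏ e, (if ζ e then (-1 : ℝ) ^ ((σ (s e)).val + (σ (t e)).val) else 1) := by
            rw [Finset.mul_sum]
            exact Finset.sum_congr rfl fun σ _ => by rw [aux_L4 s t ζ σ]
    simp_rw [step1]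
    rw [Finset.sum_comm]
    refine Finset.sum_congr rfl fun σ _ => ?_
    have hfac : ∀ ζ : E → Bool,
        percWt (fun _ => p / 2) ζ *
            ∏ e, (if ζ e then (-1 : ℝ) ^ ((σ (s e)).val + (σ (t e)).val) else 1)
          = ∏ e, (if ζ e then (p / 2) * (-1 : ℝ) ^ ((σ (s e)).val + (σ (t e)).val)
              else 1 - p / 2) := by
      intro ζ
      rw [percWt, ← Finset.prod_mul_distrib]
      refine Finset.prod_congr rfl fun e _ => ?_
      by_cases hw : ζ e <;> simp [hw]
    simp_rw [hfac]
    rw [aux_sum_bool (fun e b =>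
      if b then (p / 2) * (-1 : ℝ) ^ ((σ (s e)).val + (σ (t e)).val) else 1 - p / 2)]
    refine Finset.prod_congr rfl fun e _ => ?_
    simpa using aux_edge p (σ (s e)) (σ (t e))
  rw [hL, hR]
end

section
/- Let G=(V,E) be a finite graph without loops, let λ ≥ 0, and set p' = (1 − e^{−2λ})/2. Then for all distinct x,y ∈ V, the Ising two-point function with λ_e = λ for all edges satisfies σ(x,y) = φ_{p'}(∂ζ = {x,y}) / φ_{p'}(∂ζ = ∅), where ζ ∈ {0,1}^E is distributed according to the product measure φ_{p'} with density p', and ∂ζ = {v ∈ V : Σ_{e incident to v} ζ(e) is odd}. -/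
open scoped BigOperators symmDiff Classical

/-! With spins `ε = ±1` and `p = (1 - e^{-2λ})/2`, each edge factor is
`e^{λ(2δ_e - 1)} = e^λ (1 - p + p ε_{s e} ε_{t e})`. Expanding the product over edges writes the
Ising weight as `e^{λ|E|} ∑_ζ φ_p(ζ) ∏_v ε_v^{deg_ζ v}`. Summing over spins keeps exactly the `ζ`
whose odd-degree vertices are those carrying an inserted spin, so `∑_σ ε_x ε_y e^{H(σ)}` and `Z`
are `e^{λ|E|} 2^{|V|}` times `φ_p(∂ζ = {x,y})` and `φ_p(∂ζ = ∅)` respectively. -/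

open Finset

section HighTemperatureExpansion

variable {V E : Type} [Fintype V] [DecidableEq V] [Fintype E]

def isingSign (a : Fin 2) : ℝ := if a = 0 then 1 else -1

lemma isingSign_mul_isingSign (a b : Fin 2) :
    isingSign a * isingSign b = 2 * (if a = b then 1 else 0) - 1 := by
  fin_cases a <;> fin_cases b <;> norm_num [isingSign]

lemma sum_isingSign_pow (n : ℕ) : ∑ a : Fin 2, isingSign a ^ n = if Even n then 2 else 0 := by
  rcases Nat.even_or_odd n with h | h
  · simp [isingSign, h.neg_one_pow, h]
  · simp [isingSign, h.neg_one_pow, Nat.not_even_iff_odd.mpr h]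

lemma sum_prod_isingSign_pow (d : V → ℕ) :
    ∑ σ : V → Fin 2, ∏ v, isingSign (σ v) ^ d v
      = if ∀ v, Even (d v) then 2 ^ Fintype.card V else 0 := by
  rw [← Fintype.prod_sum fun v a => isingSign a ^ d v]
  simp_rw [sum_isingSign_pow]
  rw [Fintype.prod_ite_zero, prod_const, card_univ]

lemma sum_prod_mem_isingSign_mul_prod_pow (A : Finset V) (d : V → ℕ) :
    ∑ σ : V → Fin 2, (∏ v ∈ A, isingSign (σ v)) * ∏ v, isingSign (σ v) ^ d v
      = if {v | Odd (d v)} = (A : Set V) then 2 ^ Fintype.card V else 0 := by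
  have hmerge : ∀ σ : V → Fin 2, (∏ v ∈ A, isingSign (σ v)) * ∏ v, isingSign (σ v) ^ d v
      = ∏ v, isingSign (σ v) ^ (d v + if v ∈ A then 1 else 0) := by
    intro σ
    simp_rw [pow_add, prod_mul_distrib, pow_ite, pow_one, pow_zero, prod_ite_mem, univ_inter]
    ring
  simp_rw [hmerge, sum_prod_isingSign_pow, Set.ext_iff]
  congr 1
  refine propext (forall_congr' fun v => ?_)
  by_cases hv : v ∈ A <;> simp [hv, Nat.even_add_one]

lemma prod_pow_mDeg {M : Type*} [CommMonoid M] (s t : E → V) (m : E → ℕ) (f : V → M) :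
    ∏ v, f v ^ mDeg s t m v = ∏ e, (f (s e) * f (t e)) ^ m e := by
  simp_rw [mDeg, ← prod_pow_eq_pow_sum, mul_add, pow_add, pow_mul', mul_pow, pow_ite, pow_one,
    pow_zero, prod_mul_distrib]
  congr 1 <;> rw [prod_comm] <;> simp [ite_pow]

lemma prod_one_sub_add_mul_eq_sum_percWt (p f : E → ℝ) :
    ∏ e, (1 - p e + p e * f e)
      = ∑ ζ : E → Bool, percWt p ζ * ∏ e, f e ^ (if ζ e then 1 else 0) := by
  have hsplit : ∀ e, 1 - p e + p e * f e
      = ∑ b : Bool, (if b then p e else 1 - p e) * f e ^ (if b then 1 else 0) := by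
    simp [add_comm]
  simp_rw [hsplit, Fintype.prod_sum, percWt, ← prod_mul_distrib]

lemma exp_mul_two_mul_ite_sub_one (x : ℝ) (a b : Fin 2) :
    Real.exp (x * (((2 : ℕ) : ℝ) * (if a = b then 1 else 0) - 1))
      = Real.exp x * (1 - (1 - Real.exp (-(2 * x))) / 2
          + (1 - Real.exp (-(2 * x))) / 2 * (isingSign a * isingSign b)) := by
  rw [isingSign_mul_isingSign]
  split_ifs
  · push_cast; ring_nf
  · have hexp : Real.exp x * Real.exp (-(2 * x)) = Real.exp (-x) := by
      rw [← Real.exp_add]; ring_nf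
    push_cast
    rw [show x * (2 * 0 - 1) = -x by ring, ← hexp]
    ring

lemma pottsWt_two_eq_sum_percWt (s t : E → V) (β : ℝ) (J p : E → ℝ)
    (hp : ∀ e, p e = (1 - Real.exp (-(2 * (β * J e)))) / 2) (σ : V → Fin 2) :
    pottsWt s t 2 β J σ = (∏ e, Real.exp (β * J e)) * ∑ ζ : E → Bool,
      percWt p ζ * ∏ v, isingSign (σ v) ^ mDeg s t (fun e => if ζ e then 1 else 0) v := by
  simp_rw [pottsWt, Real.exp_sum, exp_mul_two_mul_ite_sub_one, ← hp, prod_mul_distrib,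
    prod_one_sub_add_mul_eq_sum_percWt, prod_pow_mDeg]

lemma sum_prod_mem_isingSign_mul_pottsWt (s t : E → V) (β : ℝ) (J p : E → ℝ)
    (hp : ∀ e, p e = (1 - Real.exp (-(2 * (β * J e)))) / 2) (A : Finset V) :
    ∑ σ : V → Fin 2, (∏ v ∈ A, isingSign (σ v)) * pottsWt s t 2 β J σ
      = (∏ e, Real.exp (β * J e)) * 2 ^ Fintype.card V * ∑ ζ : E → Bool,
          if sources s t (fun e => if ζ e then 1 else 0) = (A : Set V) then percWt p ζ else 0 := by
  simp_rw [pottsWt_two_eq_sum_percWt s t β J p hp, mul_sum]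
  rw [sum_comm]
  refine sum_congr rfl fun ζ _ => ?_
  set C := ∏ e, Real.exp (β * J e)
  have hfactor : ∀ σ : V → Fin 2, ∀ a b : ℝ, (∏ v ∈ A, isingSign (σ v)) * (C * (a * b))
      = C * a * ((∏ v ∈ A, isingSign (σ v)) * b) := fun _ _ _ => by ring
  simp_rw [hfactor, ← mul_sum, sum_prod_mem_isingSign_mul_prod_pow, sources]
  split_ifs with h <;> simp [h, mul_right_comm]

end HighTemperatureExpansion

theorem ising_correlation_eq_sources_ratio_general
    (V E : Type) [Fintype V] [DecidableEq V] [Fintype E]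
    (s t : E → V)
    (lam : ℝ)
    (p' : ℝ) (hp' : p' = (1 - Real.exp (-(2 * lam))) / 2)
    (x y : V) (hxy : x ≠ y) :
    pottsTwoPoint s t 2 1 (fun _ => lam) x y =
      (∑ ζ : E → Bool,
          if sources s t (fun e => if ζ e then 1 else 0) = ({x, y} : Set V)
          then percWt (fun _ => p') ζ else 0) /
      (∑ ζ : E → Bool,
          if sources s t (fun e => if ζ e then 1 else 0) = (∅ : Set V)
          then percWt (fun _ => p') ζ else 0) := by
  have hp : ∀ e : E, p' = (1 - Real.exp (-(2 * (1 * lam)))) / 2 := fun _ => by rw [hp', one_mul]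
  have hnum : ∀ σ : V → Fin 2, ((2 : ℕ) : ℝ) * (if σ x = σ y then 1 else 0) - 1
      = ∏ v ∈ {x, y}, isingSign (σ v) := by
    intro σ
    rw [prod_pair hxy, isingSign_mul_isingSign, Nat.cast_ofNat]
  have hden : pottsZ V s t 2 1 (fun _ => lam)
      = ∑ σ : V → Fin 2, (∏ v ∈ ∅, isingSign (σ v)) * pottsWt s t 2 1 (fun _ => lam) σ := by
    simp [pottsZ]
  rw [pottsTwoPoint, hden]
  simp_rw [hnum, sum_prod_mem_isingSign_mul_pottsWt s t 1 (fun _ => lam) (fun _ => p') hp,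
    coe_pair, coe_empty]
  exact mul_div_mul_left _ _ (by positivity)

/-- `σ(x,y) = φ_{p'}(∂ζ = {x,y}) / φ_{p'}(∂ζ = ∅)` for the Ising model with
`λ_e = λ` and `p' = (1 - e^{-2λ})/2`. -/
theorem ising_correlation_eq_sources_ratio
    (V E : Type) [Fintype V] [DecidableEq V] [Fintype E]
    (s t : E → V) (hloop : ∀ e, s e ≠ t e)
    (lam : ℝ) (hlam : 0 ≤ lam)
    (p' : ℝ) (hp' : p' = (1 - Real.exp (-(2 * lam))) / 2)
    (x y : V) (hxy : x ≠ y) :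
    pottsTwoPoint s t 2 1 (fun _ => lam) x y =
      (∑ ζ : E → Bool,
          if sources s t (fun e => if ζ e then 1 else 0) = ({x, y} : Set V)
          then percWt (fun _ => p') ζ else 0) /
      (∑ ζ : E → Bool,
          if sources s t (fun e => if ζ e then 1 else 0) = (∅ : Set V)
          then percWt (fun _ => p') ζ else 0) :=
  ising_correlation_eq_sources_ratio_general V E s t lam p' hp' x y hxy
end

section
/- Switching lemma (fixed multigraph version). Let G=(V,E) be a finite graph without loops and m ∈ ℕ^E. Let x,y ∈ V be distinct with x ↔ y in m, and let A ⊆ V. For n ∈ ℕ^E with n_e ≤ m_e for all e, set w(n) = Π_{e∈E} binom(m_e, n_e). Then Σ_{n ≤ m : ∂n = {x,y}, ∂(m−n) = A} w(n) = Σ_{n ≤ m : ∂n = ∅, ∂(m−n) = A △ {x,y}} w(n), where △ denotes symmetric difference. Equivalently, among subsets N of the edge set of the multigraph G_m, the number with source set ∂N = {x,y} whose complement has source set A equals the number with ∂N = ∅ whose complement has source set A △ {x,y}. -/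
open scoped BigOperators symmDiff Classical

section SwitchingAux

variable {V E : Type} [Fintype V] [DecidableEq V] [Fintype E] [DecidableEq E]

/-- Cardinality of a per-edge subset family is at most the multiplicity. -/
lemma cardLe {m : E → ℕ} (F : ∀ e, Finset (Fin (m e))) (e : E) : (F e).card ≤ m e :=
  le_trans (Finset.card_le_univ _) (by simp)

/-- `mDeg` of a difference plus `mDeg` of the subtrahend. -/
lemma mDeg_sub_add (s t : E → V) (m : E → ℕ) (F : ∀ e, Finset (Fin (m e))) (v : V) :
    mDeg s t (fun e => m e - (F e).card) v + mDeg s t (fun e => (F e).card) v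
      = mDeg s t m v := by
  simp only [mDeg, ← Finset.sum_add_distrib]
  refine Finset.sum_congr rfl fun e _ => ?_
  rw [← add_mul, Nat.sub_add_cancel (cardLe F e)]

/-- Parity of `mDeg` under pointwise symmetric difference. -/
lemma mDeg_symmDiff_parity (s t : E → V) (m : E → ℕ)
    (F P : ∀ e, Finset (Fin (m e))) (v : V) :
    mDeg s t (fun e => (F e ∆ P e).card) v % 2
      = (mDeg s t (fun e => (F e).card) v + mDeg s t (fun e => (P e).card) v) % 2 := by
  have key : ∀ e : E, (F e ∆ P e).card + 2 * (F e ∩ P e).card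
      = (F e).card + (P e).card := by
    intro e
    have h1 := Finset.card_sdiff_add_card_inter (F e) (P e)
    have h2 := Finset.card_sdiff_add_card_inter (P e) (F e)
    have h3 : (F e ∆ P e).card = (F e \ P e).card + (P e \ F e).card := by
      rw [symmDiff_def, Finset.sup_eq_union]
      exact Finset.card_union_of_disjoint (disjoint_sdiff_sdiff)
    rw [Finset.inter_comm] at h2
    omega
  have main : mDeg s t (fun e => (F e ∆ P e).card) v
      + 2 * mDeg s t (fun e => (F e ∩ P e).card) v
      = mDeg s t (fun e => (F e).card) v + mDeg s t (fun e => (P e).card) v := by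
    simp only [mDeg, Finset.mul_sum, ← Finset.sum_add_distrib]
    refine Finset.sum_congr rfl fun e _ => ?_
    have h := key e
    set w := (if s e = v then 1 else 0) + (if t e = v then 1 else 0) with hw
    calc (F e ∆ P e).card * w + 2 * ((F e ∩ P e).card * w)
        = ((F e ∆ P e).card + 2 * (F e ∩ P e).card) * w := by ring
      _ = ((F e).card + (P e).card) * w := by rw [h]
      _ = (F e).card * w + (P e).card * w := by ring
  omega

/-- Existence of an edge family whose boundary parity is supported on `{a, b}`,
given reachability. -/
lemma exists_path (s t : E → V) (m : E → ℕ) {a b : V}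
    (h : (openGraph s t fun e => m e ≠ 0).Reachable a b) :
    ∃ P : ∀ e, Finset (Fin (m e)), ∀ v : V,
      mDeg s t (fun e => (P e).card) v % 2
        = ((if v = a then 1 else 0) + (if v = b then 1 else 0)) % 2 := by
  obtain ⟨w⟩ := h
  induction w with
  | nil =>
      refine ⟨fun e => ∅, fun v => ?_⟩
      simp only [Finset.card_empty, mDeg, Nat.zero_mul, Finset.sum_const_zero]
      split_ifs <;> simp
  | @cons a c b hadj w ih =>
      obtain ⟨P', hP'⟩ := ih
      rw [openGraph, SimpleGraph.fromRel_adj] at hadj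
      obtain ⟨hac, hor⟩ := hadj
      have : ∃ e, m e ≠ 0 ∧ ((s e = a ∧ t e = c) ∨ (s e = c ∧ t e = a)) := by
        rcases hor with ⟨e, he, h1, h2⟩ | ⟨e, he, h1, h2⟩
        · exact ⟨e, he, Or.inl ⟨h1, h2⟩⟩
        · exact ⟨e, he, Or.inr ⟨h1, h2⟩⟩
      obtain ⟨e0, he0, hends⟩ := this
      set Q : ∀ e, Finset (Fin (m e)) :=
        fun e => Finset.univ.filter (fun j : Fin (m e) => e = e0 ∧ (j : ℕ) = 0) with hQ
      have hQcard : ∀ e, (Q e).card = if e = e0 then 1 else 0 := by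
        intro e
        by_cases he : e = e0
        · subst he
          rw [if_pos rfl, Finset.card_eq_one]
          refine ⟨⟨0, Nat.pos_of_ne_zero he0⟩, ?_⟩
          ext j
          simp [hQ, Fin.ext_iff]
        · rw [if_neg he]
          rw [Finset.card_eq_zero]
          ext j
          simp [hQ, he]
      have hQdeg : ∀ v, mDeg s t (fun e => (Q e).card) v
          = ((if s e0 = v then 1 else 0) + (if t e0 = v then 1 else 0)) := by
        intro v
        rw [mDeg]
        rw [Finset.sum_eq_single e0]
        · rw [hQcard, if_pos rfl, one_mul]
        · intro e _ hne
          rw [hQcard, if_neg hne, zero_mul]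
        · intro habs
          exact absurd (Finset.mem_univ e0) habs
      refine ⟨fun e => P' e ∆ Q e, fun v => ?_⟩
      show mDeg s t (fun e => (P' e ∆ Q e).card) v % 2 = _
      have hpar := mDeg_symmDiff_parity s t m P' Q v
      have hQv : mDeg s t (fun e => (Q e).card) v % 2
          = ((if v = a then 1 else 0) + (if v = c then 1 else 0)) % 2 := by
        rw [hQdeg]
        rcases hends with ⟨h1, h2⟩ | ⟨h1, h2⟩ <;> subst h1 <;> subst h2 <;>
          simp only [eq_comm] <;> omega
      have hP'v := hP' v
      omega

/-- Transfer a binomially-weighted sum over multiplicity vectors to a count of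
per-edge subset families. -/
lemma transfer (s t : E → V) (m : E → ℕ) (B B' : Set V) :
    (∑ f : (e : E) → Fin (m e + 1),
        if sources s t (fun e => (f e : ℕ)) = B ∧
            sources s t (fun e => m e - (f e : ℕ)) = B'
        then ∏ e, (m e).choose (f e : ℕ) else 0)
      = ∑ F : (e : E) → Finset (Fin (m e)),
          if sources s t (fun e => (F e).card) = B ∧
              sources s t (fun e => m e - (F e).card) = B'
          then 1 else 0 := by
  have hcard : ∀ (e : E) (u : Finset (Fin (m e))), u.card < m e + 1 := by
    intro e u
    exact Nat.lt_succ_of_le (le_trans (Finset.card_le_univ _) (by simp))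
  set φ : ((e : E) → Finset (Fin (m e))) → ((e : E) → Fin (m e + 1)) :=
    fun F e => ⟨(F e).card, hcard e (F e)⟩ with hφ
  rw [← Finset.sum_fiberwise' Finset.univ φ
    (fun f : (e : E) → Fin (m e + 1) =>
      if sources s t (fun e => (f e : ℕ)) = B ∧
          sources s t (fun e => m e - (f e : ℕ)) = B'
      then 1 else 0)]
  refine Finset.sum_congr rfl fun f _ => ?_
  rw [Finset.sum_const]
  have hfib : (Finset.univ.filter fun F => φ F = f)
      = Fintype.piFinset (fun e =>
          Finset.univ.filter fun u : Finset (Fin (m e)) => u.card = (f e : ℕ)) := by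
    ext F
    simp [hφ, Fintype.mem_piFinset, funext_iff, Fin.ext_iff]
  rw [hfib, Fintype.card_piFinset]
  simp only [Finset.univ_filter_card_eq, Finset.card_powersetCard, Finset.card_univ,
    Fintype.card_fin]
  rw [smul_eq_mul, mul_ite, mul_one, mul_zero]

end SwitchingAux
/-- Switching lemma, fixed multigraph version: if `x ↔ y` in `m` then, summing
binomial weights over sub-multisets `n ≤ m`,
`∑_{n ≤ m : ∂n = {x,y}, ∂(m-n) = A} ∏_e C(m_e, n_e)
  = ∑_{n ≤ m : ∂n = ∅, ∂(m-n) = A ∆ {x,y}} ∏_e C(m_e, n_e)`. -/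
theorem switching_lemma_fixed
    (V E : Type) [Fintype V] [DecidableEq V] [Fintype E] [DecidableEq E]
    (s t : E → V) (hloop : ∀ e, s e ≠ t e)
    (m : E → ℕ) (x y : V) (hxy : x ≠ y)
    (hconn : ConnectedIn s t m x y) (A : Set V) :
    (∑ f : (e : E) → Fin (m e + 1),
        if sources s t (fun e => (f e : ℕ)) = ({x, y} : Set V) ∧
            sources s t (fun e => m e - (f e : ℕ)) = A
        then ∏ e, (m e).choose (f e : ℕ) else 0)
      = ∑ f : (e : E) → Fin (m e + 1),
          if sources s t (fun e => (f e : ℕ)) = (∅ : Set V) ∧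
              sources s t (fun e => m e - (f e : ℕ)) = A ∆ ({x, y} : Set V)
          then ∏ e, (m e).choose (f e : ℕ) else 0 := by
  have key := transfer s t m ({x, y} : Set V) A
  have key2 := transfer s t m (∅ : Set V) (A ∆ ({x, y} : Set V))
  refine key.trans (Eq.trans ?_ key2.symm)
  obtain ⟨P, hP⟩ := exists_path s t m (show
    (openGraph s t fun e => m e ≠ 0).Reachable x y from hconn)
  refine Fintype.sum_equiv
    ⟨fun F e => F e ∆ P e, fun F e => F e ∆ P e,
      fun F => funext fun e => symmDiff_symmDiff_cancel_right _ _,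
      fun F => funext fun e => symmDiff_symmDiff_cancel_right _ _⟩ _ _ fun F => ?_
  simp only [Equiv.coe_fn_mk]
  refine if_congr ?_ rfl rfl
  have e1 := mDeg_sub_add s t m F
  have e2 := mDeg_sub_add s t m (fun e => F e ∆ P e)
  have e3 := mDeg_symmDiff_parity s t m F P
  simp only [sources, Set.ext_iff, Set.mem_setOf_eq, Set.mem_insert_iff,
    Set.mem_singleton_iff, Set.mem_empty_iff_false, Set.mem_symmDiff, Nat.odd_iff,
    ← forall_and]
  refine forall_congr' fun v => ?_
  have h1 := e1 v
  have h2 := e2 v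
  have h3 := e3 v
  have h4 := hP v
  clear key key2 hP e1 e2 e3 hconn
  by_cases hvx : v = x
  · subst hvx
    by_cases hvy : v = y
    · exact absurd hvy hxy
    · by_cases hvA : v ∈ A
      · simp only [hvy, hvA, eq_self_iff_true, if_true, if_false, iff_true,
          iff_false, not_or, not_true, not_false_iff, true_and, and_true, false_and,
          and_false, true_or, or_true, or_false, false_or] at h1 h2 h3 h4 ⊢
        omega
      · simp only [hvy, hvA, eq_self_iff_true, if_true, if_false, iff_true,
          iff_false, not_or, not_true, not_false_iff, true_and, and_true, false_and,
          and_false, true_or, or_true, or_false, false_or] at h1 h2 h3 h4 ⊢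
        omega
  · by_cases hvy : v = y
    · subst hvy
      by_cases hvA : v ∈ A
      · simp only [hvx, hvA, eq_self_iff_true, if_true, if_false, iff_true,
          iff_false, not_or, not_true, not_false_iff, true_and, and_true, false_and,
          and_false, true_or, or_true, or_false, false_or] at h1 h2 h3 h4 ⊢
        omega
      · simp only [hvx, hvA, eq_self_iff_true, if_true, if_false, iff_true,
          iff_false, not_or, not_true, not_false_iff, true_and, and_true, false_and,
          and_false, true_or, or_true, or_false, false_or] at h1 h2 h3 h4 ⊢
        omega
    · by_cases hvA : v ∈ A
      · simp only [hvx, hvy, hvA, eq_self_iff_true, if_true, if_false, iff_true,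
          iff_false, not_or, not_true, not_false_iff, true_and, and_true, false_and,
          and_false, true_or, or_true, or_false, false_or] at h1 h2 h3 h4 ⊢
        omega
      · simp only [hvx, hvy, hvA, eq_self_iff_true, if_true, if_false, iff_true,
          iff_false, not_or, not_true, not_false_iff, true_and, and_true, false_and,
          and_false, true_or, or_true, or_false, false_or] at h1 h2 h3 h4 ⊢
        omega
end
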